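/- arXiv:1008.3716 — 3 statements merged into one kernel-verified Lean document; each statement's English description precedes it below -/
import Mathlib

section
/- Let y_F be the linear chain with nearest-neighbor spacing Fε. Then for every constrained displacement u ∈ 𝒰̃, δ²E^a(y_F)[u,u] = (φ''(F) + 4 φ''(2F)) ‖u'‖²_{ℓ²_ε} − ε² φ''(2F) ‖u''‖²_{ℓ²_ε}. Consequently, if φ''(2F) ≤ 0, then inf over u ∈ 𝒰̃ \ {0} of δ²E^a(y_F)[u,u]/‖u'‖²_{ℓ²_ε} equals φ''(F) + 4 φ''(2F) − ε² φ''(2F) (2 sin(πε)/ε)², where (2 sin(πε)/ε)² = inf over u ∈ 𝒰̃ \ {0} of ‖u''‖²_{ℓ²_ε}/‖u'‖²_{ℓ²_ε}. -/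
/-!
Along a displacement `u = (a, 0)` of the straight chain every bond stays on the first axis, so
`E^a(y_F + r u)` is `ε ∑ φ(|F + r a'_ℓ|) + φ(|2F + r (a'_{ℓ+1} + a'_ℓ)|)`, whose second derivative
at `r = 0` is `ε ∑ φ''(F) (a'_ℓ)² + φ''(2F) (a'_{ℓ+1} + a'_ℓ)²`; by periodicity
`∑ (a'_{ℓ+1} + a'_ℓ)² = 4 ∑ (a'_ℓ)² - ε² ∑ (a''_ℓ)²`.

The infimum of `‖u''‖² / ‖u'‖²` is the discrete Wirtinger inequality. Transported to `ZMod N`,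
the backward difference multiplies the `k`-th discrete Fourier coefficient by `1 - e^{-2πik/N}`,
of modulus `2 sin(πk/N) ≥ 2 sin(π/N)` for `k ≠ 0`, while the `0`-th coefficient of the mean-zero
sequence `u'` vanishes; Parseval gives the bound. Equality holds for `a_ℓ = sin(2πℓ/N)`, an
eigenvector of the discrete Laplacian.
-/

noncomputable section

open Real Finset

/-- Euclidean norm on `ℝ × ℝ`. -/
def enorm2 (v : ℝ × ℝ) : ℝ := Real.sqrt (v.1 ^ 2 + v.2 ^ 2)

/-- Euclidean dot product on `ℝ × ℝ`. -/
def edot (v w : ℝ × ℝ) : ℝ := v.1 * w.1 + v.2 * w.2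

/-- `N`-periodic mean-zero displacements (the space `𝒰`). -/
def IsDisp (N : ℕ) (u : ℤ → ℝ × ℝ) : Prop :=
  (∀ ℓ : ℤ, u (ℓ + (N : ℤ)) = u ℓ) ∧ ∑ ℓ ∈ Finset.Icc (1 : ℤ) (N : ℤ), u ℓ = 0

/-- Constrained displacements (the space `𝒰̃`): second component vanishes. -/
def IsDisp1D (N : ℕ) (u : ℤ → ℝ × ℝ) : Prop :=
  IsDisp N u ∧ ∀ ℓ : ℤ, (u ℓ).2 = 0

/-- Backward difference `u'_ℓ = (u_ℓ - u_{ℓ-1})/ε`. -/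
def bd (ε : ℝ) (u : ℤ → ℝ × ℝ) (ℓ : ℤ) : ℝ × ℝ := ε⁻¹ • (u ℓ - u (ℓ - 1))

/-- The inner product `⟨v,w⟩ = ε ∑_{ℓ=1}^N v_ℓ · w_ℓ`. -/
def ip (N : ℕ) (ε : ℝ) (v w : ℤ → ℝ × ℝ) : ℝ :=
  ε * ∑ ℓ ∈ Finset.Icc (1 : ℤ) (N : ℤ), edot (v ℓ) (w ℓ)

/-- The norm `‖v‖_{ℓ²_ε}`. -/
def nrm (N : ℕ) (ε : ℝ) (v : ℤ → ℝ × ℝ) : ℝ :=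
  Real.sqrt (ε * ∑ ℓ ∈ Finset.Icc (1 : ℤ) (N : ℤ), (enorm2 (v ℓ)) ^ 2)

/-- The atomistic energy `E^a`. -/
def Ea (N : ℕ) (ε : ℝ) (φ : ℝ → ℝ) (y : ℤ → ℝ × ℝ) : ℝ :=
  ε * ∑ ℓ ∈ Finset.Icc (1 : ℤ) (N : ℤ),
    (φ (enorm2 (bd ε y ℓ)) + φ (enorm2 (bd ε y (ℓ + 1) + bd ε y ℓ)))

/-- The Cauchy–Born energy `E^CB`. -/
def ECB (N : ℕ) (ε : ℝ) (φ : ℝ → ℝ) (y : ℤ → ℝ × ℝ) : ℝ :=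
  ε * ∑ ℓ ∈ Finset.Icc (1 : ℤ) (N : ℤ),
    (φ (enorm2 (bd ε y ℓ)) + φ (2 * enorm2 (bd ε y ℓ)))

/-- The bond-angle energy `E^b`. -/
def Eb (N : ℕ) (ε α : ℝ) (y : ℤ → ℝ × ℝ) : ℝ :=
  ε * ∑ ℓ ∈ Finset.Icc (1 : ℤ) (N : ℤ),
    α * (1 - edot (bd ε y (ℓ + 1)) (bd ε y ℓ) /
      (enorm2 (bd ε y (ℓ + 1)) * enorm2 (bd ε y ℓ)))

/-- The quasi-nonlocal energy `E^QNL`. -/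
def EQNL (N K : ℕ) (ε : ℝ) (φ : ℝ → ℝ) (y : ℤ → ℝ × ℝ) : ℝ :=
  ε * ∑ ℓ ∈ Finset.Icc (1 : ℤ) (N : ℤ), φ (enorm2 (bd ε y ℓ))
  + ε * ∑ ℓ ∈ Finset.Icc (1 : ℤ) (K : ℤ), φ (enorm2 (bd ε y (ℓ + 1) + bd ε y ℓ))
  + ε * ∑ ℓ ∈ Finset.Icc ((K : ℤ) + 2) (N : ℤ), φ (2 * enorm2 (bd ε y ℓ))
  + ε / 2 * φ (2 * enorm2 (bd ε y 1)) + ε / 2 * φ (2 * enorm2 (bd ε y ((K : ℤ) + 1)))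

/-- First variation `δE(y)[u] = (d/dt) E(y + t u) |_{t=0}`. -/
def dE (E : (ℤ → ℝ × ℝ) → ℝ) (y u : ℤ → ℝ × ℝ) : ℝ :=
  deriv (fun t : ℝ => E (fun ℓ => y ℓ + t • u ℓ)) 0

/-- Second variation `δ²E(y)[u,v] = (∂²/∂t∂s) E(y + t u + s v) |_{t=s=0}`. -/
def d2E (E : (ℤ → ℝ × ℝ) → ℝ) (y u v : ℤ → ℝ × ℝ) : ℝ :=
  deriv (fun s : ℝ => deriv (fun t : ℝ => E (fun ℓ => y ℓ + t • u ℓ + s • v ℓ)) 0) 0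

/-- The linear chain `y_{F,ℓ} = (Fεℓ, 0)`. -/
def yLin (ε F : ℝ) : ℤ → ℝ × ℝ := fun ℓ => (F * ε * ℓ, 0)

/-- The uniform circular chain of radius `R = Fε/(2 sin(πε))`. -/
def yCirc (ε F : ℝ) : ℤ → ℝ × ℝ := fun ℓ =>
  (F * ε / (2 * Real.sin (π * ε)) * Real.cos (2 * π * ε * ℓ),
   F * ε / (2 * Real.sin (π * ε)) * Real.sin (2 * π * ε * ℓ))

namespace ZMod

open ComplexConjugate

variable {N : ℕ} [NeZero N]

theorem sum_dft_mul_conj (Φ : ZMod N → ℂ) :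
    ∑ k, 𝓕 Φ k * conj (𝓕 Φ k) = N * ∑ j, Φ j * conj (Φ j) := by
  have orth : ∀ j m : ZMod N, ∑ k, stdAddChar (-(j * k)) * conj (stdAddChar (-(m * k))) =
      if j = m then (N : ℂ) else 0 := by
    intro j m
    simp_rw [← AddChar.map_neg_eq_conj, ← AddChar.map_add_eq_mul,
      show ∀ k : ZMod N, -(j * k) + -(-(m * k)) = k * (m - j) from fun k => by ring]
    rw [AddChar.sum_mulShift _ (isPrimitive_stdAddChar N)]
    simp [sub_eq_zero, eq_comm]
  calc ∑ k, 𝓕 Φ k * conj (𝓕 Φ k)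
      = ∑ j, ∑ m, Φ j * conj (Φ m) *
          ∑ k, stdAddChar (-(j * k)) * conj (stdAddChar (-(m * k))) := by
        simp_rw [dft_apply, smul_eq_mul, map_sum, map_mul, Finset.sum_mul_sum, Finset.mul_sum]
        rw [Finset.sum_comm]
        refine Finset.sum_congr rfl fun j _ => ?_
        rw [Finset.sum_comm]
        refine Finset.sum_congr rfl fun m _ => Finset.sum_congr rfl fun k _ => by ring
    _ = N * ∑ j, Φ j * conj (Φ j) := by
        simp_rw [orth, mul_ite, mul_zero, Finset.sum_ite_eq, Finset.mem_univ, if_true,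
          Finset.mul_sum]
        exact Finset.sum_congr rfl fun j _ => by ring

theorem dft_sub_comp_sub_one (Φ : ZMod N → ℂ) (k : ZMod N) :
    𝓕 (fun j => Φ j - Φ (j - 1)) k = (1 - stdAddChar (-k)) * 𝓕 Φ k := by
  have shift : 𝓕 (fun j => Φ (j - 1)) k = stdAddChar (-k) * 𝓕 Φ k := by
    simp_rw [dft_apply, smul_eq_mul, Finset.mul_sum]
    rw [← Equiv.sum_comp (Equiv.addRight (1 : ZMod N))]
    refine Finset.sum_congr rfl fun j _ => ?_
    simp only [Equiv.coe_addRight, add_sub_cancel_right, ← mul_assoc, ← AddChar.map_add_eq_mul]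
    ring_nf
  rw [sub_mul, one_mul, ← shift, ← Pi.sub_apply, ← map_sub]
  rfl

theorem sum_normSq_dft (Φ : ZMod N → ℂ) :
    ∑ k, Complex.normSq (𝓕 Φ k) = N * ∑ j, Complex.normSq (Φ j) := by
  have h := sum_dft_mul_conj Φ
  simp_rw [Complex.mul_conj] at h
  exact_mod_cast h

theorem normSq_one_sub_stdAddChar_neg (k : ZMod N) :
    Complex.normSq (1 - stdAddChar (-k)) = 4 * Real.sin (π * k.val / N) ^ 2 := by
  set x := π * k.val / N
  have hk : stdAddChar k = Complex.exp ((2 * x : ℝ) * Complex.I) := by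
    rw [stdAddChar_apply, toCircle_apply]
    push_cast [x]
    congr 1
    ring
  rw [AddChar.map_neg_eq_conj, ← map_one (starRingEnd ℂ), ← map_sub, Complex.normSq_conj, hk,
    Complex.normSq_apply]
  simp only [Complex.sub_re, Complex.sub_im, Complex.one_re, Complex.one_im,
    Complex.exp_ofReal_mul_I_re, Complex.exp_ofReal_mul_I_im, Real.cos_two_mul', Real.sin_two_mul]
  linear_combination (Real.sin x ^ 2 + Real.cos x ^ 2 - 1) * Real.sin_sq_add_cos_sq x

theorem sin_pi_div_sq_le_sin_sq {k : ZMod N} (hk : k ≠ 0) :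
    Real.sin (π / N) ^ 2 ≤ Real.sin (π * k.val / N) ^ 2 := by
  have hN : (0 : ℝ) < N := by exact_mod_cast Nat.pos_of_neZero N
  have hk1 : (1 : ℝ) ≤ k.val := by
    exact_mod_cast Nat.one_le_iff_ne_zero.2 ((val_ne_zero k).2 hk)
  have hkN : (k.val : ℝ) + 1 ≤ N := by exact_mod_cast k.val_lt
  have hmem : ∀ y : ℝ, 1 ≤ y → y + 1 ≤ N → π * y / N ∈ Set.Icc 0 π := fun y h1 h2 =>
    ⟨by positivity, div_le_of_le_mul₀ hN.le pi_pos.le (by nlinarith [pi_pos])⟩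
  have hconc := strictConcaveOn_sin_Icc.concaveOn.min_le_of_mem_Icc
    (hmem 1 le_rfl (by linarith)) (hmem (N - 1) (by linarith) (by linarith))
    (z := π * k.val / N) ⟨by gcongr, by gcongr; linarith⟩
  rw [show π * (N - 1) / N = π - π * 1 / N by field_simp, Real.sin_pi_sub, min_self,
    mul_one] at hconc
  exact pow_le_pow_left₀ (Real.sin_nonneg_of_nonneg_of_le_pi (by positivity)
    (div_le_self pi_pos.le (by linarith))) hconc 2

theorem four_mul_sin_sq_mul_sum_sq_le (v : ZMod N → ℝ) (hv : ∑ j, v j = 0) :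
    4 * Real.sin (π / N) ^ 2 * ∑ j, v j ^ 2 ≤ ∑ j, (v j - v (j - 1)) ^ 2 := by
  have hN : (0 : ℝ) < N := by exact_mod_cast Nat.pos_of_neZero N
  have hv0 : 𝓕 (fun j => (v j : ℂ)) 0 = 0 := by rw [dft_apply_zero]; exact_mod_cast hv
  have hdiff : ∀ k, 𝓕 (fun j => ((v j - v (j - 1) : ℝ) : ℂ)) k =
      (1 - stdAddChar (-k)) * 𝓕 (fun j => (v j : ℂ)) k := fun k => by
    push_cast
    exact dft_sub_comp_sub_one _ k
  have parseval := sum_normSq_dft fun j => (v j : ℂ)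
  have parseval' := sum_normSq_dft fun j => ((v j - v (j - 1) : ℝ) : ℂ)
  simp only [Complex.normSq_ofReal, ← sq] at parseval parseval'
  refine le_of_mul_le_mul_left ?_ hN
  rw [← parseval', mul_left_comm, ← parseval, Finset.mul_sum]
  refine Finset.sum_le_sum fun k _ => ?_
  rw [hdiff, Complex.normSq_mul, normSq_one_sub_stdAddChar_neg]
  rcases eq_or_ne k 0 with rfl | hk
  · simp [hv0]
  · exact mul_le_mul_of_nonneg_right (by linarith [sin_pi_div_sq_le_sin_sq hk])
      (Complex.normSq_nonneg _)

end ZMod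

namespace Function.Periodic

variable {M : Type*} {N : ℕ} {g : ℤ → M}

theorem eq_of_intCast_eq (hg : Periodic g N) {a b : ℤ} (h : (a : ZMod N) = b) : g a = g b := by
  obtain ⟨k, hk⟩ := (ZMod.intCast_eq_intCast_iff_dvd_sub a b N).1 h
  have hk' := hg.int_mul k a
  rw [Int.cast_id] at hk'
  rw [show b = a + k * N by linear_combination hk, hk']

variable [NeZero N]

theorem apply_val_intCast (hg : Periodic g N) (ℓ : ℤ) : g (ℓ : ZMod N).val = g ℓ :=
  hg.eq_of_intCast_eq (by simp)

theorem sum_Icc_eq_sum_zmod [AddCommMonoid M] (hg : Periodic g N) :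
    ∑ ℓ ∈ Icc (1 : ℤ) N, g ℓ = ∑ x : ZMod N, g x.val := by
  refine Finset.sum_nbij (fun ℓ : ℤ => (ℓ : ZMod N)) (fun _ _ => Finset.mem_univ _) ?_ ?_
    (fun ℓ _ => (hg.apply_val_intCast ℓ).symm)
  · intro ℓ hℓ m hm h
    simp only [coe_Icc, Set.mem_Icc] at hℓ hm
    have := Int.eq_zero_of_abs_lt_dvd ((ZMod.intCast_eq_intCast_iff_dvd_sub ℓ m N).1 h)
      (abs_sub_lt_iff.2 ⟨by omega, by omega⟩)
    omega
  · intro x _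
    refine ⟨((x - 1).val : ℤ) + 1, ?_, by simp⟩
    have := (x - 1).val_lt
    simp only [coe_Icc, Set.mem_Icc]
    omega

theorem sum_Icc_comp_add [AddCommMonoid M] (hg : Periodic g N) (k : ℤ) :
    ∑ ℓ ∈ Icc (1 : ℤ) N, g (ℓ + k) = ∑ ℓ ∈ Icc (1 : ℤ) N, g ℓ := by
  rw [(hg.add_const k).sum_Icc_eq_sum_zmod, hg.sum_Icc_eq_sum_zmod,
    ← Equiv.sum_comp (Equiv.addRight (k : ZMod N)) fun x => g x.val]
  exact Finset.sum_congr rfl fun x _ => hg.eq_of_intCast_eq (by simp)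

theorem sum_Icc_comp_sub_one [AddCommMonoid M] (hg : Periodic g N) :
    ∑ ℓ ∈ Icc (1 : ℤ) N, g (ℓ - 1) = ∑ ℓ ∈ Icc (1 : ℤ) N, g ℓ := by
  simpa only [← sub_eq_add_neg] using hg.sum_Icc_comp_add (-1)

theorem sum_Icc_sq_pos {v : ℤ → ℝ} (hv : Periodic v N) (hne : v ≠ 0) :
    0 < ∑ ℓ ∈ Icc (1 : ℤ) N, v ℓ ^ 2 := by
  obtain ⟨ℓ, hℓ⟩ := Function.ne_iff.1 hne
  have hv2 : Periodic (fun ℓ => v ℓ ^ 2) N := hv.comp (· ^ 2)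
  rw [hv2.sum_Icc_eq_sum_zmod]
  refine Finset.sum_pos' (fun _ _ => sq_nonneg _) ⟨ℓ, Finset.mem_univ _, ?_⟩
  rw [hv.apply_val_intCast]
  exact sq_pos_of_ne_zero hℓ

theorem four_mul_sin_sq_mul_sum_Icc_sq_le {v : ℤ → ℝ} (hv : Periodic v N)
    (hmean : ∑ ℓ ∈ Icc (1 : ℤ) N, v ℓ = 0) :
    4 * Real.sin (π / N) ^ 2 * ∑ ℓ ∈ Icc (1 : ℤ) N, v ℓ ^ 2 ≤
      ∑ ℓ ∈ Icc (1 : ℤ) N, (v ℓ - v (ℓ - 1)) ^ 2 := by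
  have hdiff : Periodic (fun ℓ => (v ℓ - v (ℓ - 1)) ^ 2) N := fun ℓ => by
    simp only [add_sub_right_comm ℓ, hv _]
  rw [hv.sum_Icc_eq_sum_zmod] at hmean
  have hv2 : Periodic (fun ℓ => v ℓ ^ 2) N := hv.comp (· ^ 2)
  rw [hv2.sum_Icc_eq_sum_zmod, hdiff.sum_Icc_eq_sum_zmod]
  convert ZMod.four_mul_sin_sq_mul_sum_sq_le (fun x => v x.val) hmean using 4 with x
  exact hv.eq_of_intCast_eq (by simp)

theorem sum_Icc_add_shift_sq {p : ℤ → ℝ} (hp : Periodic p N) :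
    ∑ ℓ ∈ Icc (1 : ℤ) N, (p (ℓ + 1) + p ℓ) ^ 2 =
      4 * ∑ ℓ ∈ Icc (1 : ℤ) N, p ℓ ^ 2 - ∑ ℓ ∈ Icc (1 : ℤ) N, (p ℓ - p (ℓ - 1)) ^ 2 := by
  have hsq := (hp.comp (· ^ 2)).sum_Icc_comp_add 1
  have hdiff := (show Periodic (fun ℓ => (p ℓ - p (ℓ - 1)) ^ 2) N from fun ℓ => by
    simp only [add_sub_right_comm ℓ, hp _]).sum_Icc_comp_add 1
  simp only [Function.comp_apply, add_sub_cancel_right] at hsq hdiff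
  calc ∑ ℓ ∈ Icc (1 : ℤ) N, (p (ℓ + 1) + p ℓ) ^ 2
      = ∑ ℓ ∈ Icc (1 : ℤ) N, (2 * p (ℓ + 1) ^ 2 + 2 * p ℓ ^ 2 - (p (ℓ + 1) - p ℓ) ^ 2) :=
        Finset.sum_congr rfl fun ℓ _ => by ring
    _ = _ := by
        rw [Finset.sum_sub_distrib, Finset.sum_add_distrib, ← Finset.mul_sum, ← Finset.mul_sum,
          hsq, hdiff]
        ring

theorem sum_Icc_sub_sq_of_recurrence {b : ℤ → ℝ} (hb : Periodic b N) {c : ℝ}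
    (hrec : ∀ ℓ, b (ℓ + 1) + b (ℓ - 1) = 2 * c * b ℓ) :
    ∑ ℓ ∈ Icc (1 : ℤ) N, (b ℓ - b (ℓ - 1)) ^ 2 =
      (2 - 2 * c) * ∑ ℓ ∈ Icc (1 : ℤ) N, b ℓ ^ 2 := by
  have hsq := (hb.comp (· ^ 2)).sum_Icc_comp_sub_one
  have hprod := (show Periodic (fun ℓ => b ℓ * b (ℓ - 1)) N from fun ℓ => by
    simp only [add_sub_right_comm ℓ, hb _]).sum_Icc_comp_add 1
  simp only [Function.comp_apply, add_sub_cancel_right] at hsq hprod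
  have hcross :
      2 * ∑ ℓ ∈ Icc (1 : ℤ) N, b ℓ * b (ℓ - 1) = 2 * c * ∑ ℓ ∈ Icc (1 : ℤ) N, b ℓ ^ 2 :=
    calc 2 * ∑ ℓ ∈ Icc (1 : ℤ) N, b ℓ * b (ℓ - 1)
        = ∑ ℓ ∈ Icc (1 : ℤ) N, (b (ℓ + 1) * b ℓ + b ℓ * b (ℓ - 1)) := by
          rw [Finset.sum_add_distrib, hprod]; ring
      _ = ∑ ℓ ∈ Icc (1 : ℤ) N, 2 * c * b ℓ ^ 2 :=
          Finset.sum_congr rfl fun ℓ _ => by linear_combination b ℓ * hrec ℓ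
      _ = 2 * c * ∑ ℓ ∈ Icc (1 : ℤ) N, b ℓ ^ 2 := (Finset.mul_sum ..).symm
  calc ∑ ℓ ∈ Icc (1 : ℤ) N, (b ℓ - b (ℓ - 1)) ^ 2
      = ∑ ℓ ∈ Icc (1 : ℤ) N, b ℓ ^ 2 + ∑ ℓ ∈ Icc (1 : ℤ) N, b (ℓ - 1) ^ 2
          - 2 * ∑ ℓ ∈ Icc (1 : ℤ) N, b ℓ * b (ℓ - 1) := by
        rw [Finset.mul_sum, ← Finset.sum_add_distrib, ← Finset.sum_sub_distrib]
        exact Finset.sum_congr rfl fun ℓ _ => by ring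
    _ = _ := by rw [hsq, hcross]; ring

theorem sum_Icc_eq_zero_of_recurrence {b : ℤ → ℝ} (hb : Periodic b N) {c : ℝ} (hc : c ≠ 1)
    (hrec : ∀ ℓ, b (ℓ + 1) + b (ℓ - 1) = 2 * c * b ℓ) : ∑ ℓ ∈ Icc (1 : ℤ) N, b ℓ = 0 := by
  have h : 2 * ∑ ℓ ∈ Icc (1 : ℤ) N, b ℓ = 2 * c * ∑ ℓ ∈ Icc (1 : ℤ) N, b ℓ :=
    calc 2 * ∑ ℓ ∈ Icc (1 : ℤ) N, b ℓ = ∑ ℓ ∈ Icc (1 : ℤ) N, (b (ℓ + 1) + b (ℓ - 1)) := by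
          rw [Finset.sum_add_distrib, hb.sum_Icc_comp_add, hb.sum_Icc_comp_sub_one]; ring
      _ = ∑ ℓ ∈ Icc (1 : ℤ) N, 2 * c * b ℓ := Finset.sum_congr rfl fun ℓ _ => hrec ℓ
      _ = 2 * c * ∑ ℓ ∈ Icc (1 : ℤ) N, b ℓ := (Finset.mul_sum ..).symm
  have hc' : 2 - 2 * c ≠ 0 := fun h' => hc (by linarith)
  exact (mul_eq_zero.1 (by linear_combination h : (2 - 2 * c) * _ = 0)).resolve_left hc'

end Function.Periodic

def bdReal (ε : ℝ) (a : ℤ → ℝ) (ℓ : ℤ) : ℝ := ε⁻¹ * (a ℓ - a (ℓ - 1))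

theorem Function.Periodic.bdReal {N : ℕ} {a : ℤ → ℝ} (ha : Function.Periodic a N) (ε : ℝ) :
    Function.Periodic (bdReal ε a) N := fun ℓ => by
  simp only [_root_.bdReal, add_sub_right_comm ℓ, ha _]

theorem sum_Icc_bdReal {N : ℕ} [NeZero N] {a : ℤ → ℝ} (ha : Function.Periodic a N) (ε : ℝ) :
    ∑ ℓ ∈ Icc (1 : ℤ) N, bdReal ε a ℓ = 0 := by
  simp only [bdReal, ← Finset.mul_sum, Finset.sum_sub_distrib, ha.sum_Icc_comp_sub_one,
    sub_self, mul_zero]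

theorem sum_Icc_bdReal_sq (N : ℕ) (ε : ℝ) (a : ℤ → ℝ) :
    ∑ ℓ ∈ Icc (1 : ℤ) N, bdReal ε a ℓ ^ 2 =
      (ε ^ 2)⁻¹ * ∑ ℓ ∈ Icc (1 : ℤ) N, (a ℓ - a (ℓ - 1)) ^ 2 := by
  simp only [bdReal, mul_pow, inv_pow, Finset.mul_sum]

theorem bdReal_recurrence {a : ℤ → ℝ} {c : ℝ} (ha : ∀ ℓ, a (ℓ + 1) + a (ℓ - 1) = 2 * c * a ℓ)
    (ε : ℝ) (ℓ : ℤ) : bdReal ε a (ℓ + 1) + bdReal ε a (ℓ - 1) = 2 * c * bdReal ε a ℓ := by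
  have h := ha (ℓ - 1)
  simp only [sub_add_cancel, sub_sub, one_add_one_eq_two] at h
  simp only [bdReal, add_sub_cancel_right, sub_sub, one_add_one_eq_two]
  linear_combination ε⁻¹ * ha ℓ - ε⁻¹ * h

theorem enorm2_mk_zero (x : ℝ) : enorm2 (x, 0) = |x| := by
  simp [enorm2, Real.sqrt_sq_eq_abs]

theorem bd_mk_zero (ε : ℝ) (a : ℤ → ℝ) :
    bd ε (fun ℓ => (a ℓ, 0)) = fun ℓ => (bdReal ε a ℓ, 0) := by
  ext ℓ <;> simp [bd, bdReal]

theorem nrm_mk_zero_sq (N : ℕ) {ε : ℝ} (hε : 0 ≤ ε) (a : ℤ → ℝ) :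
    nrm N ε (fun ℓ => (a ℓ, 0)) ^ 2 = ε * ∑ ℓ ∈ Icc (1 : ℤ) N, a ℓ ^ 2 := by
  rw [nrm, Real.sq_sqrt (by positivity)]
  simp only [enorm2_mk_zero, sq_abs]

theorem isDisp1D_iff {N : ℕ} {u : ℤ → ℝ × ℝ} :
    IsDisp1D N u ↔ ∃ a : ℤ → ℝ, Function.Periodic a N ∧ ∑ ℓ ∈ Icc (1 : ℤ) N, a ℓ = 0 ∧
      u = fun ℓ => (a ℓ, 0) := by
  constructor
  · rintro ⟨⟨hper, hsum⟩, hsnd⟩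
    refine ⟨fun ℓ => (u ℓ).1, fun ℓ => congrArg Prod.fst (hper ℓ), ?_,
      funext fun ℓ => Prod.ext rfl (hsnd ℓ)⟩
    simpa only [Prod.fst_sum, Prod.fst_zero] using congrArg Prod.fst hsum
  · rintro ⟨a, hper, hsum, rfl⟩
    exact ⟨⟨fun ℓ => by simp only [hper ℓ], Prod.ext (by simpa [Prod.fst_sum])
      (by simp [Prod.snd_sum])⟩, fun _ => rfl⟩

open Filter Topology in
theorem deriv_deriv_eq_of_eventually_hasDerivAt {f f' : ℝ → ℝ} {x a : ℝ}
    (hf : ∀ᶠ y in 𝓝 x, HasDerivAt f (f' y) y) (hf' : HasDerivAt f' a x) :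
    deriv (deriv f) x = a :=
  (Filter.EventuallyEq.deriv_eq (hf.mono fun _ hy => hy.deriv)).trans hf'.deriv

open Filter Topology in
theorem eventually_hasDerivAt_comp_abs_affine {φ : ℝ → ℝ}
    (hφ : DifferentiableOn ℝ φ (Set.Ioi 0)) {x : ℝ} (hx : 0 < x) (c : ℝ) :
    ∀ᶠ r in 𝓝 0, HasDerivAt (fun r => φ |x + r * c|) (deriv φ (x + r * c) * c) r := by
  have hcont : Continuous fun r : ℝ => x + r * c := by fun_prop
  filter_upwards [continuousAt_const.eventually_lt hcont.continuousAt (by simpa using hx)]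
    with r hr
  have hline : HasDerivAt (fun r => x + r * c) c r := by
    simpa using ((hasDerivAt_id r).mul_const c).const_add x
  have habs : HasDerivAt (fun y => |y|) 1 (x + r * c) := by
    simpa [hr] using hasDerivAt_abs hr.ne'
  have hφ' : HasDerivAt φ (deriv φ (x + r * c)) |x + r * c| := by
    rw [abs_of_pos hr]
    exact (hφ.differentiableAt (Ioi_mem_nhds hr)).hasDerivAt
  refine (hφ'.comp r (habs.comp r hline)).congr_deriv ?_
  ring

theorem hasDerivAt_deriv_comp_affine {φ : ℝ → ℝ} {x : ℝ} (hφ : DifferentiableAt ℝ (deriv φ) x)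
    (c : ℝ) :
    HasDerivAt (fun r => deriv φ (x + r * c) * c) (deriv (deriv φ) x * c ^ 2) 0 := by
  have hline : HasDerivAt (fun r => x + r * c) c 0 := by
    simpa using ((hasDerivAt_id (0 : ℝ)).mul_const c).const_add x
  have hφ' : HasDerivAt (deriv φ) (deriv (deriv φ) x) (x + 0 * c) := by
    simpa using hφ.hasDerivAt
  refine ((hφ'.comp 0 hline).mul_const c).congr_deriv ?_
  ring

theorem d2E_self (E : (ℤ → ℝ × ℝ) → ℝ) (y u : ℤ → ℝ × ℝ) :
    d2E E y u u = deriv (deriv fun r : ℝ => E fun ℓ => y ℓ + r • u ℓ) 0 := by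
  simp only [d2E, add_assoc, ← add_smul]
  congr 1
  funext s
  rw [deriv_comp_add_const (f := fun r : ℝ => E fun ℓ => y ℓ + r • u ℓ), zero_add]

section SecondVariation

variable {N : ℕ} {ε : ℝ} {φ : ℝ → ℝ} {F : ℝ}

theorem bd_yLin_add_smul (hε : ε ≠ 0) (r : ℝ) (a : ℤ → ℝ) (ℓ : ℤ) :
    bd ε (fun ℓ => yLin ε F ℓ + r • (a ℓ, 0)) ℓ = (F + r * bdReal ε a ℓ, 0) := by
  ext
  · simp only [bd, yLin, bdReal, Prod.smul_fst, Prod.fst_add, Prod.fst_sub, smul_eq_mul]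
    push_cast
    field_simp
    ring
  · simp [bd, yLin]

theorem Ea_yLin_add_smul (hε : ε ≠ 0) (r : ℝ) (a : ℤ → ℝ) :
    Ea N ε φ (fun ℓ => yLin ε F ℓ + r • (a ℓ, 0)) =
      ε * ∑ ℓ ∈ Icc (1 : ℤ) N, (φ |F + r * bdReal ε a ℓ| +
        φ |2 * F + r * (bdReal ε a (ℓ + 1) + bdReal ε a ℓ)|) := by
  simp only [Ea, bd_yLin_add_smul hε, Prod.mk_add_mk, add_zero, enorm2_mk_zero]
  congr 1
  refine Finset.sum_congr rfl fun ℓ _ => ?_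
  ring_nf

theorem d2E_Ea_yLin (hε : ε ≠ 0) (hφ : ContDiffOn ℝ 2 φ (Set.Ioi 0)) (hF : 0 < F)
    (a : ℤ → ℝ) :
    d2E (Ea N ε φ) (yLin ε F) (fun ℓ => (a ℓ, 0)) (fun ℓ => (a ℓ, 0)) =
      ε * ∑ ℓ ∈ Icc (1 : ℤ) N, (deriv (deriv φ) F * bdReal ε a ℓ ^ 2 +
        deriv (deriv φ) (2 * F) * (bdReal ε a (ℓ + 1) + bdReal ε a ℓ) ^ 2) := by
  set p := bdReal ε a
  set q := fun ℓ => p (ℓ + 1) + p ℓ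
  have hF2 : 0 < 2 * F := by positivity
  have hφ1 : DifferentiableOn ℝ φ (Set.Ioi 0) := hφ.differentiableOn (by norm_num)
  have hφ' : ContDiffOn ℝ 1 (deriv φ) (Set.Ioi 0) := hφ.deriv_of_isOpen isOpen_Ioi (by norm_num)
  have hφ2 : ∀ x, 0 < x → DifferentiableAt ℝ (deriv φ) x := fun x hx =>
    (hφ'.differentiableOn one_ne_zero).differentiableAt (Ioi_mem_nhds hx)
  rw [d2E_self]
  simp_rw [Ea_yLin_add_smul hε]
  apply deriv_deriv_eq_of_eventually_hasDerivAt
    (f' := fun r => ε * ∑ ℓ ∈ Icc (1 : ℤ) N,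
      (deriv φ (F + r * p ℓ) * p ℓ + deriv φ (2 * F + r * q ℓ) * q ℓ))
  · have hterms := (Filter.eventually_all_finset (Icc (1 : ℤ) N)).2 fun ℓ _ =>
      (eventually_hasDerivAt_comp_abs_affine hφ1 hF (p ℓ)).and
        (eventually_hasDerivAt_comp_abs_affine hφ1 hF2 (q ℓ))
    filter_upwards [hterms] with r hr
    exact (HasDerivAt.fun_sum fun ℓ hℓ => (hr ℓ hℓ).1.add (hr ℓ hℓ).2).const_mul ε
  · exact (HasDerivAt.fun_sum fun ℓ _ => (hasDerivAt_deriv_comp_affine (hφ2 F hF) (p ℓ)).add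
      (hasDerivAt_deriv_comp_affine (hφ2 (2 * F) hF2) (q ℓ))).const_mul ε

end SecondVariation

section Displacements

variable {N : ℕ} {ε : ℝ} {u : ℤ → ℝ × ℝ}

theorem d2E_Ea_yLin_of_isDisp1D [NeZero N] (hε : 0 < ε) {φ : ℝ → ℝ}
    (hφ : ContDiffOn ℝ 2 φ (Set.Ioi 0)) {F : ℝ} (hF : 0 < F) (hu : IsDisp1D N u) :
    d2E (Ea N ε φ) (yLin ε F) u u =
      (deriv (deriv φ) F + 4 * deriv (deriv φ) (2 * F)) * nrm N ε (bd ε u) ^ 2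
        - ε ^ 2 * deriv (deriv φ) (2 * F) * nrm N ε (bd ε (bd ε u)) ^ 2 := by
  obtain ⟨a, ha, -, rfl⟩ := isDisp1D_iff.1 hu
  rw [d2E_Ea_yLin hε.ne' hφ hF, bd_mk_zero, bd_mk_zero, nrm_mk_zero_sq N hε.le,
    nrm_mk_zero_sq N hε.le, sum_Icc_bdReal_sq N ε (bdReal ε a), Finset.sum_add_distrib,
    ← Finset.mul_sum, ← Finset.mul_sum, (ha.bdReal ε).sum_Icc_add_shift_sq]
  field_simp
  ring

theorem nrm_bd_sq_pos (hN : 2 ≤ N) (hε : 0 < ε) (hu : IsDisp1D N u) (hne : u ≠ 0) :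
    0 < nrm N ε (bd ε u) ^ 2 := by
  have : NeZero N := ⟨by omega⟩
  obtain ⟨a, ha, hmean, rfl⟩ := isDisp1D_iff.1 hu
  have ha0 : a ≠ 0 := by rintro rfl; exact hne rfl
  have hsin : 0 < Real.sin (π / N) :=
    Real.sin_pos_of_pos_of_lt_pi (by positivity) (div_lt_self pi_pos (by exact_mod_cast hN))
  have hwirt := ha.four_mul_sin_sq_mul_sum_Icc_sq_le hmean
  have hpos := ha.sum_Icc_sq_pos ha0
  rw [bd_mk_zero, nrm_mk_zero_sq N hε.le, sum_Icc_bdReal_sq]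
  exact mul_pos hε (mul_pos (by positivity) ((by positivity : (0 : ℝ) < _).trans_le hwirt))

theorem sq_mul_nrm_bd_sq_le [NeZero N] (hε : ε = (N : ℝ)⁻¹) (hu : IsDisp1D N u) :
    (2 * Real.sin (π * ε) / ε) ^ 2 * nrm N ε (bd ε u) ^ 2 ≤ nrm N ε (bd ε (bd ε u)) ^ 2 := by
  have hεpos : 0 < ε := by rw [hε]; exact inv_pos.2 (by exact_mod_cast Nat.pos_of_neZero N)
  obtain ⟨a, ha, -, rfl⟩ := isDisp1D_iff.1 hu
  have hwirt := (ha.bdReal ε).four_mul_sin_sq_mul_sum_Icc_sq_le (sum_Icc_bdReal ha ε)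
  rw [div_eq_mul_inv π, ← hε] at hwirt
  rw [bd_mk_zero, bd_mk_zero, nrm_mk_zero_sq N hεpos.le, nrm_mk_zero_sq N hεpos.le,
    sum_Icc_bdReal_sq N ε (bdReal ε a)]
  calc (2 * Real.sin (π * ε) / ε) ^ 2 * (ε * ∑ ℓ ∈ Icc (1 : ℤ) N, bdReal ε a ℓ ^ 2)
      = ε⁻¹ * (4 * Real.sin (π * ε) ^ 2 * ∑ ℓ ∈ Icc (1 : ℤ) N, bdReal ε a ℓ ^ 2) := by
        field_simp
        ring
    _ ≤ ε⁻¹ * ∑ ℓ ∈ Icc (1 : ℤ) N, (bdReal ε a ℓ - bdReal ε a (ℓ - 1)) ^ 2 := by gcongr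
    _ = _ := by field_simp

theorem exists_nrm_bd_bd_sq_eq (hN : 3 ≤ N) (hε : ε = (N : ℝ)⁻¹) :
    ∃ u, IsDisp1D N u ∧ u ≠ 0 ∧
      nrm N ε (bd ε (bd ε u)) ^ 2 = (2 * Real.sin (π * ε) / ε) ^ 2 * nrm N ε (bd ε u) ^ 2 := by
  have : NeZero N := ⟨by omega⟩
  have hN' : (3 : ℝ) ≤ N := by exact_mod_cast hN
  have hεpos : 0 < ε := by rw [hε]; positivity
  set θ := 2 * π / N with hθ_def
  have hθN : θ * N = 2 * π := div_mul_cancel₀ _ (by positivity)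
  have hθ : 0 < θ ∧ θ < π :=
    ⟨by positivity, (div_lt_iff₀ (by positivity)).2 (by nlinarith [pi_pos])⟩
  set a : ℤ → ℝ := fun ℓ => Real.sin (θ * ℓ)
  have hper : Function.Periodic a N := fun ℓ => by
    simp only [a, Int.cast_add, Int.cast_natCast, mul_add, hθN, Real.sin_add_two_pi]
  have hrec : ∀ ℓ, a (ℓ + 1) + a (ℓ - 1) = 2 * Real.cos θ * a ℓ := fun ℓ => by
    simp only [a, Int.cast_add, Int.cast_sub, Int.cast_one, mul_add, mul_sub, mul_one,
      Real.sin_add, Real.sin_sub]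
    ring
  have hcos : Real.cos θ ≠ 1 := fun h =>
    hθ.1.ne' ((Real.cos_eq_one_iff_of_lt_of_lt (by linarith [pi_pos]) (by linarith)).1 h)
  have hmean := hper.sum_Icc_eq_zero_of_recurrence hcos hrec
  refine ⟨_, isDisp1D_iff.2 ⟨a, hper, hmean, rfl⟩, fun h => ?_, ?_⟩
  · have h1 := congrArg (fun u => (u 1).1) h
    simp only [a, Int.cast_one, mul_one, Pi.zero_apply, Prod.fst_zero] at h1
    exact (Real.sin_pos_of_pos_of_lt_pi hθ.1 hθ.2).ne' h1
  · have hlap := (hper.bdReal ε).sum_Icc_sub_sq_of_recurrence (bdReal_recurrence hrec ε)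
    have hθ2 : 2 - 2 * Real.cos θ = 4 * Real.sin (π * ε) ^ 2 := by
      rw [show θ = 2 * (π * ε) by rw [hθ_def, hε]; ring, Real.cos_two_mul, Real.cos_sq']
      ring
    rw [bd_mk_zero, bd_mk_zero, nrm_mk_zero_sq N hεpos.le, nrm_mk_zero_sq N hεpos.le,
      sum_Icc_bdReal_sq N ε (bdReal ε a), hlap, hθ2]
    field_simp
    ring

end Displacements

theorem isLeast_div_of_le_of_eq {ι : Type*} {P Q : ι → Prop} {A B : ι → ℝ} {m : ℝ}
    (hB : ∀ i, P i → Q i → 0 < B i) (hA : ∀ i, P i → Q i → m * B i ≤ A i)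
    (h₀ : ∃ i, P i ∧ Q i ∧ A i = m * B i) :
    IsLeast {r | ∃ i, P i ∧ Q i ∧ r = A i / B i} m := by
  refine ⟨?_, ?_⟩
  · obtain ⟨i, hP, hQ, hAi⟩ := h₀
    exact ⟨i, hP, hQ, by rw [hAi, mul_div_cancel_right₀ _ (hB i hP hQ).ne']⟩
  · rintro r ⟨i, hP, hQ, rfl⟩
    exact (le_div_iff₀ (hB i hP hQ)).2 (hA i hP hQ)

theorem stmt_1 (N : ℕ) (hN : 4 ≤ N) (ε : ℝ) (hε : ε = (N : ℝ)⁻¹)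
    (φ : ℝ → ℝ) (hφ : ContDiffOn ℝ 2 φ (Set.Ioi 0)) (F : ℝ) (hF : 0 < F) :
    (∀ u : ℤ → ℝ × ℝ, IsDisp1D N u →
      d2E (Ea N ε φ) (yLin ε F) u u =
        (deriv (deriv φ) F + 4 * deriv (deriv φ) (2 * F)) * (nrm N ε (bd ε u)) ^ 2
          - ε ^ 2 * deriv (deriv φ) (2 * F) * (nrm N ε (bd ε (bd ε u))) ^ 2) ∧
    (deriv (deriv φ) (2 * F) ≤ 0 →
      IsGLB {r : ℝ | ∃ u : ℤ → ℝ × ℝ, IsDisp1D N u ∧ u ≠ 0 ∧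
          r = d2E (Ea N ε φ) (yLin ε F) u u / (nrm N ε (bd ε u)) ^ 2}
        (deriv (deriv φ) F + 4 * deriv (deriv φ) (2 * F)
          - ε ^ 2 * deriv (deriv φ) (2 * F) * (2 * Real.sin (π * ε) / ε) ^ 2)) ∧
    IsGLB {r : ℝ | ∃ u : ℤ → ℝ × ℝ, IsDisp1D N u ∧ u ≠ 0 ∧
        r = (nrm N ε (bd ε (bd ε u))) ^ 2 / (nrm N ε (bd ε u)) ^ 2}
      ((2 * Real.sin (π * ε) / ε) ^ 2) := by
  have : NeZero N := ⟨by omega⟩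
  have hεpos : 0 < ε := by rw [hε]; positivity
  have hvar := fun u (hu : IsDisp1D N u) => d2E_Ea_yLin_of_isDisp1D hεpos hφ hF hu
  have hpos := fun u (hu : IsDisp1D N u) (hne : u ≠ 0) => nrm_bd_sq_pos (by omega) hεpos hu hne
  have hlow := fun u (hu : IsDisp1D N u) => sq_mul_nrm_bd_sq_le hε hu
  obtain ⟨u₀, hu₀, hne₀, heq₀⟩ := exists_nrm_bd_bd_sq_eq (by omega) hε
  refine ⟨hvar, fun hφ₂ => ?_,
    (isLeast_div_of_le_of_eq hpos (fun u hu _ => hlow u hu) ⟨u₀, hu₀, hne₀, heq₀⟩).isGLB⟩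
  refine (isLeast_div_of_le_of_eq hpos (fun u hu _ => ?_) ⟨u₀, hu₀, hne₀, ?_⟩).isGLB
  · rw [hvar u hu]
    linarith [mul_le_mul_of_nonpos_left (hlow u hu)
      (mul_nonpos_of_nonneg_of_nonpos (sq_nonneg ε) hφ₂)]
  · rw [hvar u₀ hu₀, heq₀]
    ring
end
end

section
/- Let y_F be the linear chain with nearest-neighbor spacing Fε, let f ∈ 𝒰, and let u^a ∈ 𝒰 satisfy δE^a(y_F)[v] + δ²E^a(y_F)[u^a, v] = ⟨f, v⟩ for all v ∈ 𝒰. Then for every v ∈ 𝒰, | δE^CB(y_F)[v] + δ²E^CB(y_F)[u^a, v] − ⟨f, v⟩ | ≤ ε² max{ |φ''(2F)|, |φ'(2F)/(2F)| } ‖(u^a)'''‖_{ℓ²_ε} ‖v'‖_{ℓ²_ε}. -/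
/-
At the linear chain every bond is parallel to `e₁`. Hence the first variations of `E^a` and
`E^CB` agree up to a periodic index shift, and both second variations are sums of the diagonal
forms `Q_r(a, b) = φ''(r) a₁ b₁ + φ'(r)/r a₂ b₂` on bond increments. The energies differ only in
the next-nearest-neighbour bonds, `4 Q_{2F}(u'_ℓ, v'_ℓ)` against
`Q_{2F}(u'_{ℓ+1} + u'_ℓ, v'_{ℓ+1} + v'_ℓ)`, and summation by parts turns the difference into
`-ε² Q_{2F}(u'''_{ℓ+1}, v'_ℓ)`. Subtracting the atomistic equation leaves exactly this
consistency error, which Cauchy–Schwarz bounds.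
-/

noncomputable section

open Real Finset

open Filter Topology Function

lemma continuous_enorm2 : Continuous enorm2 := by
  unfold enorm2; fun_prop

lemma enorm2_axis {R : ℝ} (hR : 0 ≤ R) : enorm2 (R, 0) = R := by
  simp [enorm2, Real.sqrt_sq hR]

lemma hasDerivAt_enorm2_line {p : ℝ × ℝ} (hp : enorm2 p ≠ 0) (a : ℝ × ℝ) :
    HasDerivAt (fun t : ℝ => enorm2 (p + t • a)) (edot p a / enorm2 p) 0 := by
  have hsq : HasDerivAt (fun t : ℝ => (p.1 + t * a.1) ^ 2 + (p.2 + t * a.2) ^ 2)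
      (2 * edot p a) 0 :=
    ((((hasDerivAt_mul_const a.1).const_add p.1).fun_pow 2).fun_add
      (((hasDerivAt_mul_const a.2).const_add p.2).fun_pow 2)).congr_deriv
      (by simp only [edot]; ring)
  have h0 : (p.1 + 0 * a.1) ^ 2 + (p.2 + 0 * a.2) ^ 2 ≠ 0 := by
    simpa using (Real.sqrt_ne_zero'.mp hp).ne'
  refine (hsq.sqrt h0).congr_deriv ?_ |>.congr_of_eventuallyEq (Eventually.of_forall fun t => ?_)
  · simp only [enorm2, zero_mul, add_zero]; field_simp
  · simp [enorm2]

def bondDeriv (φ : ℝ → ℝ) (c : ℝ) (p a : ℝ × ℝ) : ℝ :=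
  c * deriv φ (c * enorm2 p) * (edot p a / enorm2 p)

lemma hasDerivAt_bond {φ : ℝ → ℝ} {c : ℝ} {p : ℝ × ℝ} (hp : enorm2 p ≠ 0)
    (hφ : DifferentiableAt ℝ φ (c * enorm2 p)) (a : ℝ × ℝ) :
    HasDerivAt (fun t : ℝ => φ (c * enorm2 (p + t • a))) (bondDeriv φ c p a) 0 := by
  have hφ' : HasDerivAt φ (deriv φ (c * enorm2 p)) (c * enorm2 (p + (0 : ℝ) • a)) := by
    simpa using hφ.hasDerivAt
  exact (hφ'.comp (0 : ℝ) ((hasDerivAt_enorm2_line hp a).const_mul c)).congr_deriv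
    (by simp only [bondDeriv]; ring)

def diagForm (α β : ℝ) (x y : ℝ × ℝ) : ℝ := α * (x.1 * y.1) + β * (x.2 * y.2)

/-- `d = ∂ₜ f(0, 0)` and `m = ∂ₛ ∂ₜ f(0, 0)`; asking for `∂ₜ f(0, s)` on a whole neighbourhood
of `s = 0` is what makes both quantities additive. -/
def HasMixedDerivAt (f : ℝ → ℝ → ℝ) (d m : ℝ) : Prop :=
  ∃ D : ℝ → ℝ, (∀ᶠ s in 𝓝 0, HasDerivAt (fun t => f t s) (D s) 0) ∧ D 0 = d ∧
    HasDerivAt D m 0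

namespace HasMixedDerivAt

variable {f g : ℝ → ℝ → ℝ} {d d' m m' : ℝ}

lemma deriv_eq (h : HasMixedDerivAt f d m) : deriv (fun t => f t 0) 0 = d := by
  obtain ⟨D, hD, hD0, -⟩ := h
  exact hD0 ▸ hD.self_of_nhds.deriv

lemma deriv_deriv_eq (h : HasMixedDerivAt f d m) :
    deriv (fun s => deriv (fun t => f t s) 0) 0 = m := by
  obtain ⟨D, hD, -, hm⟩ := h
  have hDeq : (fun s => deriv (fun t => f t s) 0) =ᶠ[𝓝 0] D := hD.mono fun s hs => hs.deriv
  rw [hDeq.deriv_eq, hm.deriv]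

lemma congr (h : HasMixedDerivAt f d m) (hfg : ∀ t s, f t s = g t s) (hd : d = d')
    (hm : m = m') : HasMixedDerivAt g d' m' := by
  obtain rfl : f = g := funext fun t => funext (hfg t)
  exact hd ▸ hm ▸ h

lemma add (hf : HasMixedDerivAt f d m) (hg : HasMixedDerivAt g d' m') :
    HasMixedDerivAt (fun t s => f t s + g t s) (d + d') (m + m') := by
  obtain ⟨D, hD, hD0, hm⟩ := hf
  obtain ⟨D', hD', hD0', hm'⟩ := hg
  exact ⟨D + D', (hD.and hD').mono fun s hs => hs.1.add hs.2, by simp [hD0, hD0'], hm.add hm'⟩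

lemma const_mul (c : ℝ) (hf : HasMixedDerivAt f d m) :
    HasMixedDerivAt (fun t s => c * f t s) (c * d) (c * m) := by
  obtain ⟨D, hD, hD0, hm⟩ := hf
  exact ⟨fun s => c * D s, hD.mono fun s hs => hs.const_mul c, by simp [hD0], hm.const_mul c⟩

lemma sum {ι : Type*} (s : Finset ι) {f : ι → ℝ → ℝ → ℝ} {d m : ι → ℝ}
    (h : ∀ i ∈ s, HasMixedDerivAt (f i) (d i) (m i)) :
    HasMixedDerivAt (fun t s' => ∑ i ∈ s, f i t s') (∑ i ∈ s, d i) (∑ i ∈ s, m i) := by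
  classical
  induction s using Finset.induction_on with
  | empty => exact ⟨0, Eventually.of_forall fun _ => by simp [hasDerivAt_const], by simp, by simp⟩
  | insert i s hi ih =>
    simp only [Finset.sum_insert hi]
    exact (h i (mem_insert_self i s)).add (ih fun j hj => h j (mem_insert_of_mem hj))

end HasMixedDerivAt

lemma hasMixedDerivAt_bond {φ : ℝ → ℝ} (hφ : DifferentiableOn ℝ φ (Set.Ioi 0))
    (hφ' : DifferentiableOn ℝ (deriv φ) (Set.Ioi 0)) {c R : ℝ} (hc : 0 < c) (hR : 0 < R)
    (a b : ℝ × ℝ) :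
    HasMixedDerivAt (fun t s => φ (c * enorm2 ((R, 0) + t • a + s • b)))
      (c * deriv φ (c * R) * a.1)
      (diagForm (c ^ 2 * deriv (deriv φ) (c * R)) (c * deriv φ (c * R) / R) a b) := by
  have hR' : enorm2 (R, 0) = R := enorm2_axis hR.le
  have hpos : ∀ᶠ s : ℝ in 𝓝 0, 0 < enorm2 ((R, 0) + s • b) := by
    have hcont : Continuous fun s : ℝ => enorm2 ((R, 0) + s • b) :=
      continuous_enorm2.comp (by fun_prop)
    refine continuousAt_const.eventually_lt hcont.continuousAt ?_
    simpa [hR'] using hR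
  refine ⟨fun s => bondDeriv φ c ((R, 0) + s • b) a, hpos.mono fun s hs => ?_, ?_, ?_⟩
  · have hd := hasDerivAt_bond hs.ne' (hφ.differentiableAt (Ioi_mem_nhds (by positivity))) a
    simpa only [add_right_comm] using hd
  · simp only [bondDeriv, zero_smul, add_zero, hR', edot, zero_mul]
    field_simp
  · have hn : HasDerivAt (fun s : ℝ => enorm2 ((R, 0) + s • b)) b.1 0 := by
      refine (hasDerivAt_enorm2_line (hR'.symm ▸ hR.ne') b).congr_deriv ?_
      simp only [edot, hR', zero_mul, add_zero]
      field_simp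
    have he : HasDerivAt (fun s : ℝ => edot ((R, 0) + s • b) a) (edot b a) 0 := by
      refine ((((hasDerivAt_mul_const b.1).const_add R).mul_const a.1).fun_add
        ((hasDerivAt_mul_const b.2).mul_const a.2)).congr_of_eventuallyEq ?_ |>.congr_deriv ?_
      · exact Eventually.of_forall fun s => by simp [edot]
      · simp only [edot]
    have hφ'' : HasDerivAt (deriv φ) (deriv (deriv φ) (c * R))
        (c * enorm2 ((R, 0) + (0 : ℝ) • b)) := by
      simpa [hR'] using (hφ'.differentiableAt (Ioi_mem_nhds (by positivity))).hasDerivAt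
    have hn0 : enorm2 ((R, 0) + (0 : ℝ) • b) ≠ 0 := by simpa [hR'] using hR.ne'
    refine (((hφ''.comp (0 : ℝ) (hn.const_mul c)).const_mul c).mul (he.div hn hn0)).congr_deriv ?_
    simp only [diagForm, edot, Pi.div_apply, comp_apply, zero_smul, add_zero, hR']
    field_simp
    ring

lemma sum_Icc_one_sub {M : Type*} [AddCommGroup M] (g : ℤ → M) (n : ℕ) :
    ∑ ℓ ∈ Icc (1 : ℤ) n, (g (ℓ + 1) - g ℓ) = g (n + 1) - g 1 := by
  induction n with
  | zero => simp
  | succ n ih =>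
    push_cast
    rw [← insert_Icc_right_eq_Icc_add_one (by omega), sum_insert (by simp), ih]
    abel

namespace Function.Periodic

variable {M : Type*} [AddCommGroup M] {g : ℤ → M} {N : ℕ}

lemma sum_Icc_sub_eq_zero (hg : Periodic g N) : ∑ ℓ ∈ Icc (1 : ℤ) N, (g (ℓ + 1) - g ℓ) = 0 := by
  rw [sum_Icc_one_sub, add_comm, hg, sub_self]

lemma sum_Icc_comp_add_one (hg : Periodic g N) :
    ∑ ℓ ∈ Icc (1 : ℤ) N, g (ℓ + 1) = ∑ ℓ ∈ Icc (1 : ℤ) N, g ℓ := by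
  rw [← sub_eq_zero, ← sum_sub_distrib, hg.sum_Icc_sub_eq_zero]

lemma bd {u : ℤ → ℝ × ℝ} (hu : Periodic u N) (ε : ℝ) : Periodic (bd ε u) N := fun ℓ => by
  simp only [_root_.bd, show ℓ + N - 1 = ℓ - 1 + N by ring, hu _]

lemma nrm_comp_add_one {w : ℤ → ℝ × ℝ} (hw : Periodic w N) (ε : ℝ) :
    nrm N ε (fun ℓ => w (ℓ + 1)) = nrm N ε w := by
  have h := (hw.comp fun x => enorm2 x ^ 2).sum_Icc_comp_add_one
  simp only [comp_apply] at h
  rw [nrm, nrm, h]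

end Function.Periodic

section DiagForm

variable (α β : ℝ)

lemma diagForm_smul_left (c : ℝ) (x y : ℝ × ℝ) :
    diagForm α β (c • x) y = c * diagForm α β x y := by
  simp only [diagForm, Prod.smul_fst, Prod.smul_snd, smul_eq_mul]; ring

lemma abs_diagForm_le (x y : ℝ × ℝ) :
    |diagForm α β x y| ≤ max |α| |β| * (enorm2 x * enorm2 y) := by
  have hcs := Real.sum_mul_le_sqrt_mul_sqrt univ ![|x.1|, |x.2|] ![|y.1|, |y.2|]
  simp only [Fin.sum_univ_two, Matrix.cons_val_zero, Matrix.cons_val_one, sq_abs] at hcs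
  calc |diagForm α β x y| ≤ |α| * (|x.1| * |y.1|) + |β| * (|x.2| * |y.2|) := by
        simpa only [diagForm, abs_mul] using
          abs_add_le (α * (x.1 * y.1)) (β * (x.2 * y.2))
    _ ≤ max |α| |β| * (|x.1| * |y.1| + |x.2| * |y.2|) := by
        rw [mul_add]
        exact add_le_add (mul_le_mul_of_nonneg_right (le_max_left _ _) (by positivity))
          (mul_le_mul_of_nonneg_right (le_max_right _ _) (by positivity))
    _ ≤ max |α| |β| * (enorm2 x * enorm2 y) := by
        gcongr
        exact hcs

variable {N : ℕ}

lemma sum_four_diagForm_sub {a b : ℤ → ℝ × ℝ} (ha : Periodic a N) (hb : Periodic b N) :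
    ∑ ℓ ∈ Icc (1 : ℤ) N,
        (4 * diagForm α β (a ℓ) (b ℓ) - diagForm α β (a (ℓ + 1) + a ℓ) (b (ℓ + 1) + b ℓ)) =
      -∑ ℓ ∈ Icc (1 : ℤ) N, diagForm α β (a (ℓ + 1) - (2 : ℝ) • a ℓ + a (ℓ - 1)) (b ℓ) := by
  have hG : Periodic (fun ℓ => diagForm α β (a ℓ) (b ℓ)) N := fun ℓ => by simp only [ha ℓ, hb ℓ]
  have hH : Periodic (fun ℓ => diagForm α β (a (ℓ - 1)) (b ℓ)) N := fun ℓ => by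
    simp only [show ℓ + N - 1 = ℓ - 1 + N by ring, ha _, hb ℓ]
  have hpt : ∀ ℓ, 4 * diagForm α β (a ℓ) (b ℓ) -
      diagForm α β (a (ℓ + 1) + a ℓ) (b (ℓ + 1) + b ℓ) =
        -diagForm α β (a (ℓ + 1) - (2 : ℝ) • a ℓ + a (ℓ - 1)) (b ℓ) -
          (diagForm α β (a (ℓ + 1)) (b (ℓ + 1)) - diagForm α β (a ℓ) (b ℓ)) -
          (diagForm α β (a (ℓ + 1 - 1)) (b (ℓ + 1)) - diagForm α β (a (ℓ - 1)) (b ℓ)) := by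
    intro ℓ
    simp only [diagForm, add_sub_cancel_right, Prod.fst_add, Prod.snd_add, Prod.fst_sub,
      Prod.snd_sub, Prod.smul_fst, Prod.smul_snd, smul_eq_mul]
    ring
  simp only [hpt, sum_sub_distrib, sum_neg_distrib, hG.sum_Icc_sub_eq_zero,
    hH.sum_Icc_sub_eq_zero, sub_zero]

lemma mul_abs_sum_diagForm_le {ε : ℝ} (hε : 0 ≤ ε) (w z : ℤ → ℝ × ℝ) :
    ε * |∑ ℓ ∈ Icc (1 : ℤ) N, diagForm α β (w ℓ) (z ℓ)| ≤
      max |α| |β| * nrm N ε w * nrm N ε z := by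
  set M := max |α| |β|
  calc ε * |∑ ℓ ∈ Icc (1 : ℤ) N, diagForm α β (w ℓ) (z ℓ)|
      ≤ ε * (M * ∑ ℓ ∈ Icc (1 : ℤ) N, enorm2 (w ℓ) * enorm2 (z ℓ)) := by
        rw [mul_sum]
        gcongr
        exact (abs_sum_le_sum_abs _ _).trans (sum_le_sum fun ℓ _ => abs_diagForm_le α β _ _)
    _ ≤ ε * (M * (√(∑ ℓ ∈ Icc (1 : ℤ) N, enorm2 (w ℓ) ^ 2) *
          √(∑ ℓ ∈ Icc (1 : ℤ) N, enorm2 (z ℓ) ^ 2))) := by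
        gcongr
        exact Real.sum_mul_le_sqrt_mul_sqrt _ _ _
    _ = M * nrm N ε w * nrm N ε z := by
        rw [nrm, nrm, Real.sqrt_mul hε, Real.sqrt_mul hε]
        linear_combination (-M * √(∑ ℓ ∈ Icc (1 : ℤ) N, enorm2 (w ℓ) ^ 2) *
          √(∑ ℓ ∈ Icc (1 : ℤ) N, enorm2 (z ℓ) ^ 2)) * Real.sq_sqrt hε

end DiagForm

lemma bd_add_smul_add_smul (ε t s : ℝ) (y u v : ℤ → ℝ × ℝ) (ℓ : ℤ) :
    bd ε (fun k => y k + t • u k + s • v k) ℓ = bd ε y ℓ + t • bd ε u ℓ + s • bd ε v ℓ := by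
  simp only [bd]; module

lemma bd_yLin {ε : ℝ} (hε : ε ≠ 0) (F : ℝ) (ℓ : ℤ) : bd ε (yLin ε F) ℓ = (F, 0) := by
  ext
  · simp [bd, yLin]
    field_simp
    ring
  · simp [bd, yLin]

lemma sq_smul_bd_bd_add_one {ε : ℝ} (hε : ε ≠ 0) (a : ℤ → ℝ × ℝ) (ℓ : ℤ) :
    ε ^ 2 • bd ε (bd ε a) (ℓ + 1) = a (ℓ + 1) - (2 : ℝ) • a ℓ + a (ℓ - 1) := by
  simp only [bd, add_sub_cancel_right, smul_sub, smul_smul]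
  field_simp
  module

section LinearChain

variable {N : ℕ} {ε F : ℝ} {φ : ℝ → ℝ}

lemma hasMixedDerivAt_Ea_yLin (hφ : DifferentiableOn ℝ φ (Set.Ioi 0))
    (hφ' : DifferentiableOn ℝ (deriv φ) (Set.Ioi 0)) (hε : ε ≠ 0) (hF : 0 < F)
    (u v : ℤ → ℝ × ℝ) :
    HasMixedDerivAt (fun t s => Ea N ε φ (fun ℓ => yLin ε F ℓ + t • u ℓ + s • v ℓ))
      (ε * ∑ ℓ ∈ Icc (1 : ℤ) N,
        (deriv φ F * (bd ε u ℓ).1 + deriv φ (2 * F) * (bd ε u (ℓ + 1) + bd ε u ℓ).1))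
      (ε * ∑ ℓ ∈ Icc (1 : ℤ) N,
        (diagForm (deriv (deriv φ) F) (deriv φ F / F) (bd ε u ℓ) (bd ε v ℓ) +
          diagForm (deriv (deriv φ) (2 * F)) (deriv φ (2 * F) / (2 * F))
            (bd ε u (ℓ + 1) + bd ε u ℓ) (bd ε v (ℓ + 1) + bd ε v ℓ))) := by
  refine ((HasMixedDerivAt.sum (Icc (1 : ℤ) N) fun ℓ _ =>
    (hasMixedDerivAt_bond hφ hφ' one_pos hF (bd ε u ℓ) (bd ε v ℓ)).add
      (hasMixedDerivAt_bond hφ hφ' one_pos (by positivity : 0 < 2 * F)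
        (bd ε u (ℓ + 1) + bd ε u ℓ) (bd ε v (ℓ + 1) + bd ε v ℓ))).const_mul ε).congr
    (fun t s => ?_) (by simp) (by simp)
  simp only [Ea, bd_add_smul_add_smul, bd_yLin hε, one_mul]
  congr! 5 with ℓ
  rw [show ((2 * F, 0) : ℝ × ℝ) = (F, 0) + (F, 0) by simp [two_mul]]
  module

lemma hasMixedDerivAt_ECB_yLin (hφ : DifferentiableOn ℝ φ (Set.Ioi 0))
    (hφ' : DifferentiableOn ℝ (deriv φ) (Set.Ioi 0)) (hε : ε ≠ 0) (hF : 0 < F)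
    (u v : ℤ → ℝ × ℝ) :
    HasMixedDerivAt (fun t s => ECB N ε φ (fun ℓ => yLin ε F ℓ + t • u ℓ + s • v ℓ))
      (ε * ∑ ℓ ∈ Icc (1 : ℤ) N, (deriv φ F * (bd ε u ℓ).1 + 2 * deriv φ (2 * F) * (bd ε u ℓ).1))
      (ε * ∑ ℓ ∈ Icc (1 : ℤ) N,
        (diagForm (deriv (deriv φ) F) (deriv φ F / F) (bd ε u ℓ) (bd ε v ℓ) +
          4 * diagForm (deriv (deriv φ) (2 * F)) (deriv φ (2 * F) / (2 * F))
            (bd ε u ℓ) (bd ε v ℓ))) := by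
  refine ((HasMixedDerivAt.sum (Icc (1 : ℤ) N) fun ℓ _ =>
    (hasMixedDerivAt_bond hφ hφ' one_pos hF (bd ε u ℓ) (bd ε v ℓ)).add
      (hasMixedDerivAt_bond hφ hφ' two_pos hF (bd ε u ℓ) (bd ε v ℓ))).const_mul ε).congr
    (fun t s => ?_) (by simp) ?_
  · simp only [ECB, bd_add_smul_add_smul, bd_yLin hε, one_mul]
  · simp only [diagForm, Finset.mul_sum]
    congr! 2 with ℓ
    field_simp
    ring

lemma dE_ECB_yLin (hφ : DifferentiableOn ℝ φ (Set.Ioi 0))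
    (hφ' : DifferentiableOn ℝ (deriv φ) (Set.Ioi 0)) (hε : ε ≠ 0) (hF : 0 < F)
    {v : ℤ → ℝ × ℝ} (hv : Periodic v N) :
    dE (ECB N ε φ) (yLin ε F) v = dE (Ea N ε φ) (yLin ε F) v := by
  have hA := (hasMixedDerivAt_Ea_yLin hφ hφ' hε hF (N := N) v v).deriv_eq
  have hC := (hasMixedDerivAt_ECB_yLin hφ hφ' hε hF (N := N) v v).deriv_eq
  have hshift := ((hv.bd ε).comp Prod.fst).sum_Icc_comp_add_one
  simp only [zero_smul, add_zero] at hA hC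
  simp only [comp_apply] at hshift
  rw [dE, dE, hA, hC]
  simp only [Prod.fst_add, mul_add, sum_add_distrib, ← mul_sum, hshift]
  ring

lemma d2E_ECB_sub_d2E_Ea_yLin (hφ : DifferentiableOn ℝ φ (Set.Ioi 0))
    (hφ' : DifferentiableOn ℝ (deriv φ) (Set.Ioi 0)) (hε : ε ≠ 0) (hF : 0 < F)
    {u v : ℤ → ℝ × ℝ} (hu : Periodic u N) (hv : Periodic v N) :
    d2E (ECB N ε φ) (yLin ε F) u v - d2E (Ea N ε φ) (yLin ε F) u v =
      -(ε ^ 2 * (ε * ∑ ℓ ∈ Icc (1 : ℤ) N,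
        diagForm (deriv (deriv φ) (2 * F)) (deriv φ (2 * F) / (2 * F))
          (bd ε (bd ε (bd ε u)) (ℓ + 1)) (bd ε v ℓ))) := by
  rw [d2E, d2E, (hasMixedDerivAt_ECB_yLin hφ hφ' hε hF u v).deriv_deriv_eq,
    (hasMixedDerivAt_Ea_yLin hφ hφ' hε hF u v).deriv_deriv_eq, ← mul_sub, ← sum_sub_distrib]
  simp only [add_sub_add_left_eq_sub]
  rw [sum_four_diagForm_sub _ _ (hu.bd ε) (hv.bd ε)]
  simp only [← sq_smul_bd_bd_add_one hε, diagForm_smul_left, ← mul_sum]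
  ring

end LinearChain

theorem stmt_9_general (N : ℕ) (hN : 4 ≤ N) (ε : ℝ) (hε : ε = (N : ℝ)⁻¹)
    (φ : ℝ → ℝ) (hφ : ContDiffOn ℝ 2 φ (Set.Ioi 0)) (F : ℝ) (hF : 0 < F)
    (f ua : ℤ → ℝ × ℝ) (hua : IsDisp N ua)
    (heq : ∀ v : ℤ → ℝ × ℝ, IsDisp N v →
      dE (Ea N ε φ) (yLin ε F) v + d2E (Ea N ε φ) (yLin ε F) ua v = ip N ε f v) :
    ∀ v : ℤ → ℝ × ℝ, IsDisp N v →
      |dE (ECB N ε φ) (yLin ε F) v + d2E (ECB N ε φ) (yLin ε F) ua v - ip N ε f v| ≤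
        ε ^ 2 * max |deriv (deriv φ) (2 * F)| |deriv φ (2 * F) / (2 * F)| *
          nrm N ε (bd ε (bd ε (bd ε ua))) * nrm N ε (bd ε v) := by
  intro v hv
  have hε0 : 0 < ε := hε ▸ inv_pos.2 (by exact_mod_cast (by omega : 0 < N))
  have hφ₁ : DifferentiableOn ℝ φ (Set.Ioi 0) := hφ.differentiableOn (by norm_num)
  have hφ₂ : DifferentiableOn ℝ (deriv φ) (Set.Ioi 0) :=
    (hφ.deriv_of_isOpen isOpen_Ioi (m := 1) (by norm_num)).differentiableOn one_ne_zero
  have hu''' : Periodic (bd ε (bd ε (bd ε ua))) N := ((Periodic.bd hua.1 ε).bd ε).bd ε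
  have hres : dE (ECB N ε φ) (yLin ε F) v + d2E (ECB N ε φ) (yLin ε F) ua v - ip N ε f v =
      d2E (ECB N ε φ) (yLin ε F) ua v - d2E (Ea N ε φ) (yLin ε F) ua v := by
    rw [← heq v hv, dE_ECB_yLin hφ₁ hφ₂ hε0.ne' hF hv.1]
    ring
  rw [hres, d2E_ECB_sub_d2E_Ea_yLin hφ₁ hφ₂ hε0.ne' hF hua.1 hv.1, abs_neg, abs_mul,
    abs_of_nonneg (by positivity), abs_mul, abs_of_nonneg hε0.le,
    ← hu'''.nrm_comp_add_one ε]
  calc _ ≤ ε ^ 2 * (max |deriv (deriv φ) (2 * F)| |deriv φ (2 * F) / (2 * F)| *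
        nrm N ε (fun ℓ => bd ε (bd ε (bd ε ua)) (ℓ + 1)) * nrm N ε (bd ε v)) :=
        mul_le_mul_of_nonneg_left (mul_abs_sum_diagForm_le _ _ hε0.le _ _) (by positivity)
    _ = _ := by ring

theorem stmt_9 (N : ℕ) (hN : 4 ≤ N) (ε : ℝ) (hε : ε = (N : ℝ)⁻¹)
    (φ : ℝ → ℝ) (hφ : ContDiffOn ℝ 2 φ (Set.Ioi 0)) (F : ℝ) (hF : 0 < F)
    (f ua : ℤ → ℝ × ℝ) (hf : IsDisp N f) (hua : IsDisp N ua)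
    (heq : ∀ v : ℤ → ℝ × ℝ, IsDisp N v →
      dE (Ea N ε φ) (yLin ε F) v + d2E (Ea N ε φ) (yLin ε F) ua v = ip N ε f v) :
    ∀ v : ℤ → ℝ × ℝ, IsDisp N v →
      |dE (ECB N ε φ) (yLin ε F) v + d2E (ECB N ε φ) (yLin ε F) ua v - ip N ε f v| ≤
        ε ^ 2 * max |deriv (deriv φ) (2 * F)| |deriv φ (2 * F) / (2 * F)| *
          nrm N ε (bd ε (bd ε (bd ε ua))) * nrm N ε (bd ε v) :=
  stmt_9_general N hN ε hε φ hφ F hF f ua hua heq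
end
end

section
/- Let y_F be the linear chain with nearest-neighbor spacing Fε, and suppose γ₁ := φ''(F) + 4 φ''(2F) > 0. Given f ∈ 𝒰̃, let u^a, u^CB ∈ 𝒰̃ satisfy δE^a(y_F)[v] + δ²E^a(y_F)[u^a, v] = ⟨f, v⟩ and δE^CB(y_F)[v] + δ²E^CB(y_F)[u^CB, v] = ⟨f, v⟩, respectively, for all v ∈ 𝒰̃. Then ‖(u^a − u^CB)'‖_{ℓ²_ε} ≤ (ε² |φ''(2F)| / γ₁) ‖(u^a)'''‖_{ℓ²_ε}. -/
noncomputable section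

open Real Finset

/-!
Along displacements in `𝒰̃` every bond of `y_F + u` stays on the axis, so both energies become
sums of `φ(|F + u'_ℓ|)` and `φ(|2F + u'_{ℓ+1} + u'_ℓ|)`, resp. `φ(|2F + 2u'_ℓ|)`, whose
variations at `y_F` are explicit. The first variations agree by periodicity, and by a discrete
summation by parts the second variations differ only by
`φ''(2F) ∑ v'_ℓ (u'_{ℓ+1} - 2u'_ℓ + u'_{ℓ-1}) = ε² φ''(2F) ∑ v'_ℓ u'''_{ℓ+1}`.
Testing both equations with `v = u^a - u^CB` and subtracting therefore gives
`γ₁ ‖v'‖² = -ε² φ''(2F) ⟨(u^a)'''_{·+1}, v'⟩`, and Cauchy–Schwarz concludes.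
-/

namespace LinearChain

open Function Filter Topology

def bdiff (ε : ℝ) (g : ℤ → ℝ) (ℓ : ℤ) : ℝ := ε⁻¹ * (g ℓ - g (ℓ - 1))

section Differences

variable {N : ℕ} {ε : ℝ} {a b g : ℤ → ℝ}

theorem sum_Icc_comp_add_one (hN : 1 ≤ N) (hg : Periodic g N) :
    ∑ ℓ ∈ Icc (1 : ℤ) N, g (ℓ + 1) = ∑ ℓ ∈ Icc (1 : ℤ) N, g ℓ := by
  have hN' : (1 : ℤ) ≤ N := by exact_mod_cast hN
  have hwrap : g (N + 1) = g 1 := by rw [add_comm]; exact hg 1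
  calc ∑ ℓ ∈ Icc (1 : ℤ) N, g (ℓ + 1) = ∑ ℓ ∈ Icc (1 + 1 : ℤ) (N + 1), g ℓ := by
        rw [← map_add_right_Icc, sum_map]; rfl
    _ = ∑ ℓ ∈ Icc (1 : ℤ) (N + 1), g ℓ - g 1 := by
        rw [← insert_Icc_add_one_left_eq_Icc (a := (1 : ℤ)) (b := N + 1) (by omega),
          sum_insert (by simp)]
        ring
    _ = ∑ ℓ ∈ Icc (1 : ℤ) N, g ℓ := by
        rw [← insert_Icc_right_eq_Icc_add_one (a := (1 : ℤ)) (b := N) (by omega),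
          sum_insert (by simp), hwrap]
        ring

theorem _root_.Function.Periodic.bdiff (hg : Periodic g N) : Periodic (bdiff ε g) N :=
  fun ℓ => by simp only [LinearChain.bdiff, hg ℓ, add_sub_right_comm ℓ, hg (ℓ - 1)]

theorem bdiff_sub (x y : ℤ → ℝ) : bdiff ε (x - y) = bdiff ε x - bdiff ε y := by
  ext ℓ; simp only [bdiff, Pi.sub_apply]; ring

theorem sq_mul_bdiff_bdiff_add_one (hε : ε ≠ 0) (ℓ : ℤ) :
    ε ^ 2 * bdiff ε (bdiff ε g) (ℓ + 1) = g (ℓ + 1) - 2 * g ℓ + g (ℓ - 1) := by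
  simp only [bdiff, add_sub_cancel_right]
  field_simp
  ring

theorem sum_Icc_add_mul_add (hN : 1 ≤ N) (ha : Periodic a N) (hb : Periodic b N) :
    ∑ ℓ ∈ Icc (1 : ℤ) N, (b (ℓ + 1) + b ℓ) * (a (ℓ + 1) + a ℓ) =
      4 * ∑ ℓ ∈ Icc (1 : ℤ) N, b ℓ * a ℓ +
        ∑ ℓ ∈ Icc (1 : ℤ) N, b ℓ * (a (ℓ + 1) - 2 * a ℓ + a (ℓ - 1)) := by
  have hdiag := sum_Icc_comp_add_one hN (hb.mul ha)
  have hoff := sum_Icc_comp_add_one hN (hb.mul (ha.sub_const 1))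
  simp only [Pi.mul_apply, add_sub_cancel_right] at hdiag hoff
  rw [mul_sum, ← sum_add_distrib, ← sub_eq_zero, ← sum_sub_distrib]
  calc ∑ ℓ ∈ Icc (1 : ℤ) N, ((b (ℓ + 1) + b ℓ) * (a (ℓ + 1) + a ℓ) -
        (4 * (b ℓ * a ℓ) + b ℓ * (a (ℓ + 1) - 2 * a ℓ + a (ℓ - 1))))
      = ∑ ℓ ∈ Icc (1 : ℤ) N, ((b (ℓ + 1) * a (ℓ + 1) - b ℓ * a ℓ) +
          (b (ℓ + 1) * a ℓ - b ℓ * a (ℓ - 1))) := sum_congr rfl fun ℓ _ => by ring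
    _ = 0 := by rw [sum_add_distrib, sum_sub_distrib, sum_sub_distrib, hdiag, hoff]; ring

end Differences

section Estimate

variable {N : ℕ} {ε : ℝ}

theorem sum_sq_sub_eq_of_sum_eq (hN : 1 ≤ N) (hε : ε ≠ 0) {a q : ℤ → ℝ} (ha : Periodic a N)
    (hq : Periodic q N) (c₁ c₂ : ℝ)
    (h : ∑ ℓ ∈ Icc (1 : ℤ) N, (c₁ * (a - q) ℓ * a ℓ +
          c₂ * ((a - q) (ℓ + 1) + (a - q) ℓ) * (a (ℓ + 1) + a ℓ)) =
        ∑ ℓ ∈ Icc (1 : ℤ) N, (c₁ * (a - q) ℓ * q ℓ + c₂ * (2 * (a - q) ℓ) * (2 * q ℓ))) :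
    (c₁ + 4 * c₂) * ∑ ℓ ∈ Icc (1 : ℤ) N, (a - q) ℓ ^ 2 =
      -(c₂ * ε ^ 2) * ∑ ℓ ∈ Icc (1 : ℤ) N, (a - q) ℓ * bdiff ε (bdiff ε a) (ℓ + 1) := by
  set w := a - q
  have hlhs : ∑ ℓ ∈ Icc (1 : ℤ) N,
        (c₁ * w ℓ * a ℓ + c₂ * (w (ℓ + 1) + w ℓ) * (a (ℓ + 1) + a ℓ)) =
      c₁ * ∑ ℓ ∈ Icc (1 : ℤ) N, w ℓ * a ℓ +
        c₂ * ∑ ℓ ∈ Icc (1 : ℤ) N, (w (ℓ + 1) + w ℓ) * (a (ℓ + 1) + a ℓ) := by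
    simp only [sum_add_distrib, mul_sum, mul_assoc]
  have hrhs : ∑ ℓ ∈ Icc (1 : ℤ) N, (c₁ * w ℓ * q ℓ + c₂ * (2 * w ℓ) * (2 * q ℓ)) =
      (c₁ + 4 * c₂) * ∑ ℓ ∈ Icc (1 : ℤ) N, w ℓ * q ℓ := by
    rw [mul_sum]; exact sum_congr rfl fun _ _ => by ring
  have hsq : ∑ ℓ ∈ Icc (1 : ℤ) N, w ℓ ^ 2 =
      ∑ ℓ ∈ Icc (1 : ℤ) N, w ℓ * a ℓ - ∑ ℓ ∈ Icc (1 : ℤ) N, w ℓ * q ℓ := by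
    rw [← sum_sub_distrib]; exact sum_congr rfl fun ℓ _ => by simp only [w, Pi.sub_apply]; ring
  have hsecond : ∑ ℓ ∈ Icc (1 : ℤ) N, w ℓ * (a (ℓ + 1) - 2 * a ℓ + a (ℓ - 1)) =
      ε ^ 2 * ∑ ℓ ∈ Icc (1 : ℤ) N, w ℓ * bdiff ε (bdiff ε a) (ℓ + 1) := by
    rw [mul_sum]
    exact sum_congr rfl fun ℓ _ => by rw [← sq_mul_bdiff_bdiff_add_one hε]; ring
  linear_combination (c₁ + 4 * c₂) * hsq + h - hlhs + hrhs
    - c₂ * sum_Icc_add_mul_add hN ha (ha.sub hq) - c₂ * hsecond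

theorem sqrt_mul_sum_sq_le_of_eq (hε : 0 ≤ ε) (hN : 1 ≤ N) {w T : ℤ → ℝ} (hT : Periodic T N)
    {γ K : ℝ} (hγ : 0 < γ)
    (h : γ * ∑ ℓ ∈ Icc (1 : ℤ) N, w ℓ ^ 2 = -K * ∑ ℓ ∈ Icc (1 : ℤ) N, w ℓ * T (ℓ + 1)) :
    √(ε * ∑ ℓ ∈ Icc (1 : ℤ) N, w ℓ ^ 2) ≤ |K| / γ * √(ε * ∑ ℓ ∈ Icc (1 : ℤ) N, T ℓ ^ 2) := by
  set A := ∑ ℓ ∈ Icc (1 : ℤ) N, w ℓ ^ 2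
  set B := ∑ ℓ ∈ Icc (1 : ℤ) N, T ℓ ^ 2
  have hB : B = ∑ ℓ ∈ Icc (1 : ℤ) N, T (ℓ + 1) ^ 2 :=
    (sum_Icc_comp_add_one hN (hT.comp (· ^ 2))).symm
  have hcs : |∑ ℓ ∈ Icc (1 : ℤ) N, w ℓ * T (ℓ + 1)| ≤ √A * √B := by
    refine abs_le.2 ⟨?_, hB ▸ Real.sum_mul_le_sqrt_mul_sqrt _ _ _⟩
    have := Real.sum_mul_le_sqrt_mul_sqrt (Icc (1 : ℤ) N) w (fun ℓ => -T (ℓ + 1))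
    simp only [neg_sq, mul_neg, sum_neg_distrib, ← hB] at this
    linarith
  have hquad : γ * √A ^ 2 ≤ |K| * √A * √B := by
    rw [Real.sq_sqrt (sum_nonneg fun _ _ => sq_nonneg _), h, mul_assoc]
    calc -K * ∑ ℓ ∈ Icc (1 : ℤ) N, w ℓ * T (ℓ + 1)
        ≤ |K| * |∑ ℓ ∈ Icc (1 : ℤ) N, w ℓ * T (ℓ + 1)| := by
          rw [← abs_mul]; exact neg_mul K _ ▸ neg_le_abs _
      _ ≤ |K| * (√A * √B) := mul_le_mul_of_nonneg_left hcs (abs_nonneg K)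
  have hA : √A ≤ |K| / γ * √B := by
    rw [div_mul_eq_mul_div, le_div_iff₀ hγ]
    have := Real.sqrt_nonneg A
    have := mul_nonneg (abs_nonneg K) (Real.sqrt_nonneg B)
    nlinarith
  rw [Real.sqrt_mul hε, Real.sqrt_mul hε]
  calc √ε * √A ≤ √ε * (|K| / γ * √B) := mul_le_mul_of_nonneg_left hA (Real.sqrt_nonneg ε)
    _ = |K| / γ * (√ε * √B) := by ring

end Estimate

def horiz (g : ℤ → ℝ) : ℤ → ℝ × ℝ := fun ℓ => (g ℓ, 0)

section Horizontal

variable {N : ℕ} {ε : ℝ} {u v : ℤ → ℝ × ℝ}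

theorem IsDisp1D.eq_horiz (hu : IsDisp1D N u) : u = horiz fun ℓ => (u ℓ).1 :=
  funext fun ℓ => Prod.ext rfl (hu.2 ℓ)

theorem IsDisp1D.periodic {g : ℤ → ℝ} (hg : IsDisp1D N (horiz g)) : Periodic g N :=
  fun ℓ => congrArg Prod.fst (hg.1.1 ℓ)

theorem IsDisp1D.sub (hu : IsDisp1D N u) (hv : IsDisp1D N v) :
    IsDisp1D N fun ℓ => u ℓ - v ℓ :=
  ⟨⟨fun ℓ => by simp only [hu.1.1 ℓ, hv.1.1 ℓ], by rw [sum_sub_distrib, hu.1.2, hv.1.2, sub_zero]⟩,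
    fun ℓ => by simp [hu.2 ℓ, hv.2 ℓ]⟩

theorem horiz_sub (x y : ℤ → ℝ) : (fun ℓ => horiz x ℓ - horiz y ℓ) = horiz (x - y) :=
  funext fun _ => Prod.ext rfl (sub_zero 0)

theorem bd_horiz (g : ℤ → ℝ) : bd ε (horiz g) = horiz (bdiff ε g) :=
  funext fun ℓ => Prod.ext rfl (by simp [bd, horiz])

theorem enorm2_mk_zero (c : ℝ) : enorm2 (c, 0) = |c| := by
  simp [enorm2, Real.sqrt_sq_eq_abs]

theorem nrm_horiz (g : ℤ → ℝ) : nrm N ε (horiz g) = √(ε * ∑ ℓ ∈ Icc (1 : ℤ) N, g ℓ ^ 2) := by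
  simp only [nrm, horiz, enorm2_mk_zero, sq_abs]

theorem yLin_add_smul_horiz (F t s : ℝ) (x z : ℤ → ℝ) :
    (fun ℓ => yLin ε F ℓ + t • horiz x ℓ + s • horiz z ℓ) =
      horiz fun ℓ => F * ε * ℓ + t * x ℓ + s * z ℓ :=
  funext fun ℓ => by simp [yLin, horiz]

theorem bdiff_yLin_add (hε : ε ≠ 0) (F t s : ℝ) (x z : ℤ → ℝ) (ℓ : ℤ) :
    bdiff ε (fun ℓ => F * ε * ℓ + t * x ℓ + s * z ℓ) ℓ =
      F + t * bdiff ε x ℓ + s * bdiff ε z ℓ := by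
  simp only [bdiff]
  push_cast
  field_simp
  ring

theorem Ea_horiz (φ : ℝ → ℝ) (g : ℤ → ℝ) :
    Ea N ε φ (horiz g) = ε * ∑ ℓ ∈ Icc (1 : ℤ) N,
      (φ |bdiff ε g ℓ| + φ |bdiff ε g (ℓ + 1) + bdiff ε g ℓ|) := by
  simp only [Ea, bd_horiz, horiz, Prod.mk_add_mk, add_zero, enorm2_mk_zero]

theorem ECB_horiz (φ : ℝ → ℝ) (g : ℤ → ℝ) :
    ECB N ε φ (horiz g) = ε * ∑ ℓ ∈ Icc (1 : ℤ) N, (φ |bdiff ε g ℓ| + φ |2 * bdiff ε g ℓ|) := by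
  simp only [ECB, bd_horiz, horiz, enorm2_mk_zero, abs_mul, abs_two]

end Horizontal

section BondSums

variable {φ : ℝ → ℝ} {x y : ℝ}

theorem hasDerivAt_of_contDiffOn_two (hφ : ContDiffOn ℝ 2 φ (Set.Ioi 0)) (hx : 0 < x) :
    HasDerivAt φ (deriv φ x) x :=
  ((hφ.differentiableOn two_ne_zero).differentiableAt (Ioi_mem_nhds hx)).hasDerivAt

theorem hasDerivAt_deriv_of_contDiffOn_two (hφ : ContDiffOn ℝ 2 φ (Set.Ioi 0)) (hx : 0 < x) :
    HasDerivAt (deriv φ) (deriv (deriv φ) x) x :=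
  (((hφ.deriv_of_isOpen isOpen_Ioi (m := 1) (by norm_num)).differentiableOn
    one_ne_zero).differentiableAt (Ioi_mem_nhds hx)).hasDerivAt

theorem hasDerivAt_comp_abs_add_mul (hφ : ContDiffOn ℝ 2 φ (Set.Ioi 0)) (hx : 0 < x) (a : ℝ) :
    HasDerivAt (fun t => φ |x + t * a|) (deriv φ x * a) 0 := by
  have hlin : HasDerivAt (fun t => x + t * a) a 0 := by
    simpa using ((hasDerivAt_id (0 : ℝ)).mul_const a).const_add x
  have habs : HasDerivAt (fun t => |x + t * a|) a 0 := by
    have h := (hasDerivAt_abs_pos (x := x + 0 * a) (by simpa using hx)).comp 0 hlin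
    rwa [one_mul] at h
  exact (hasDerivAt_of_contDiffOn_two hφ hx).comp_of_eq 0 habs (by simp [abs_of_pos hx])

theorem eventually_hasDerivAt_comp_abs_add_mul (hφ : ContDiffOn ℝ 2 φ (Set.Ioi 0)) (hx : 0 < x)
    (a b : ℝ) :
    ∀ᶠ s in 𝓝 0, HasDerivAt (fun t => φ |x + t * a + s * b|) (deriv φ (x + s * b) * a) 0 := by
  have hpos : ∀ᶠ s in 𝓝 (0 : ℝ), 0 < x + s * b :=
    (continuous_const.add (continuous_id.mul continuous_const)).continuousAt.eventually
      (Ioi_mem_nhds (by simpa using hx))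
  filter_upwards [hpos] with s hs
  convert hasDerivAt_comp_abs_add_mul hφ hs a using 1
  funext t
  rw [add_right_comm]

theorem hasDerivAt_deriv_comp_add_mul (hφ : ContDiffOn ℝ 2 φ (Set.Ioi 0)) (hx : 0 < x)
    (a b : ℝ) :
    HasDerivAt (fun s => deriv φ (x + s * b) * a) (deriv (deriv φ) x * b * a) 0 := by
  have hlin : HasDerivAt (fun s => x + s * b) b 0 := by
    simpa using ((hasDerivAt_id (0 : ℝ)).mul_const b).const_add x
  simpa using ((hasDerivAt_deriv_of_contDiffOn_two hφ hx).comp_of_eq 0 hlin (by simp)).mul_const a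

theorem deriv_deriv_eq_of_eventually_hasDerivAt {f : ℝ → ℝ → ℝ} {g : ℝ → ℝ} {c : ℝ}
    (hf : ∀ᶠ s in 𝓝 0, HasDerivAt (fun t => f t s) (g s) 0) (hg : HasDerivAt g c 0) :
    deriv (fun s => deriv (fun t => f t s) 0) 0 = c := by
  rw [EventuallyEq.deriv_eq (hf.mono fun _ hs => hs.deriv)]
  exact hg.deriv

theorem hasDerivAt_mul_sum_comp_abs (hφ : ContDiffOn ℝ 2 φ (Set.Ioi 0)) (hx : 0 < x) (hy : 0 < y)
    (ε : ℝ) (S : Finset ℤ) (a A : ℤ → ℝ) :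
    HasDerivAt (fun t => ε * ∑ ℓ ∈ S, (φ |x + t * a ℓ| + φ |y + t * A ℓ|))
      (ε * ∑ ℓ ∈ S, (deriv φ x * a ℓ + deriv φ y * A ℓ)) 0 :=
  (HasDerivAt.fun_sum fun ℓ _ => (hasDerivAt_comp_abs_add_mul hφ hx (a ℓ)).add
    (hasDerivAt_comp_abs_add_mul hφ hy (A ℓ))).const_mul ε

theorem deriv_deriv_mul_sum_comp_abs (hφ : ContDiffOn ℝ 2 φ (Set.Ioi 0)) (hx : 0 < x) (hy : 0 < y)
    (ε : ℝ) (S : Finset ℤ) (a A b B : ℤ → ℝ) :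
    deriv (fun s => deriv (fun t => ε * ∑ ℓ ∈ S,
        (φ |x + t * a ℓ + s * b ℓ| + φ |y + t * A ℓ + s * B ℓ|)) 0) 0 =
      ε * ∑ ℓ ∈ S, (deriv (deriv φ) x * b ℓ * a ℓ + deriv (deriv φ) y * B ℓ * A ℓ) := by
  refine deriv_deriv_eq_of_eventually_hasDerivAt
    (g := fun s => ε * ∑ ℓ ∈ S, (deriv φ (x + s * b ℓ) * a ℓ + deriv φ (y + s * B ℓ) * A ℓ))
    ?_ ((HasDerivAt.fun_sum fun ℓ _ => (hasDerivAt_deriv_comp_add_mul hφ hx (a ℓ) (b ℓ)).add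
      (hasDerivAt_deriv_comp_add_mul hφ hy (A ℓ) (B ℓ))).const_mul ε)
  filter_upwards [(eventually_all_finset S).2 fun ℓ _ =>
    (eventually_hasDerivAt_comp_abs_add_mul hφ hx (a ℓ) (b ℓ)).and
      (eventually_hasDerivAt_comp_abs_add_mul hφ hy (A ℓ) (B ℓ))] with s hs
  exact (HasDerivAt.fun_sum fun ℓ hℓ => (hs ℓ hℓ).1.add (hs ℓ hℓ).2).const_mul ε

end BondSums

section Variations

variable {N : ℕ} {ε F : ℝ} {φ : ℝ → ℝ}

theorem Ea_yLin_add (hε : ε ≠ 0) (t s : ℝ) (x z : ℤ → ℝ) :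
    Ea N ε φ (fun ℓ => yLin ε F ℓ + t • horiz x ℓ + s • horiz z ℓ) =
      ε * ∑ ℓ ∈ Icc (1 : ℤ) N, (φ |F + t * bdiff ε x ℓ + s * bdiff ε z ℓ| +
        φ |2 * F + t * (bdiff ε x (ℓ + 1) + bdiff ε x ℓ) +
          s * (bdiff ε z (ℓ + 1) + bdiff ε z ℓ)|) := by
  rw [yLin_add_smul_horiz, Ea_horiz]
  simp only [bdiff_yLin_add hε]
  congr 1
  refine sum_congr rfl fun ℓ _ => ?_
  congr 3
  ring

theorem ECB_yLin_add (hε : ε ≠ 0) (t s : ℝ) (x z : ℤ → ℝ) :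
    ECB N ε φ (fun ℓ => yLin ε F ℓ + t • horiz x ℓ + s • horiz z ℓ) =
      ε * ∑ ℓ ∈ Icc (1 : ℤ) N, (φ |F + t * bdiff ε x ℓ + s * bdiff ε z ℓ| +
        φ |2 * F + t * (2 * bdiff ε x ℓ) + s * (2 * bdiff ε z ℓ)|) := by
  rw [yLin_add_smul_horiz, ECB_horiz]
  simp only [bdiff_yLin_add hε]
  congr 1
  refine sum_congr rfl fun ℓ _ => ?_
  congr 3
  ring

theorem dE_Ea_yLin_eq_dE_ECB_yLin (hφ : ContDiffOn ℝ 2 φ (Set.Ioi 0)) (hε : ε ≠ 0) (hF : 0 < F)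
    (hN : 1 ≤ N) {z : ℤ → ℝ} (hz : Periodic z N) :
    dE (Ea N ε φ) (yLin ε F) (horiz z) = dE (ECB N ε φ) (yLin ε F) (horiz z) := by
  have hEa (t : ℝ) := by simpa using Ea_yLin_add (N := N) (F := F) (φ := φ) hε t 0 z z
  have hECB (t : ℝ) := by simpa using ECB_yLin_add (N := N) (F := F) (φ := φ) hε t 0 z z
  simp only [dE, hEa, hECB]
  rw [(hasDerivAt_mul_sum_comp_abs hφ hF (by positivity) ε _ _ _).deriv,
    (hasDerivAt_mul_sum_comp_abs hφ hF (by positivity) ε _ _ _).deriv]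
  simp only [mul_add, sum_add_distrib, ← mul_sum, sum_Icc_comp_add_one hN hz.bdiff]
  ring

theorem d2E_Ea_yLin (hφ : ContDiffOn ℝ 2 φ (Set.Ioi 0)) (hε : ε ≠ 0) (hF : 0 < F)
    (x z : ℤ → ℝ) :
    d2E (Ea N ε φ) (yLin ε F) (horiz x) (horiz z) =
      ε * ∑ ℓ ∈ Icc (1 : ℤ) N, (deriv (deriv φ) F * bdiff ε z ℓ * bdiff ε x ℓ +
        deriv (deriv φ) (2 * F) * (bdiff ε z (ℓ + 1) + bdiff ε z ℓ) *
          (bdiff ε x (ℓ + 1) + bdiff ε x ℓ)) := by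
  simp only [d2E, Ea_yLin_add hε]
  exact deriv_deriv_mul_sum_comp_abs hφ hF (by positivity) ε _ _ _ _ _

theorem d2E_ECB_yLin (hφ : ContDiffOn ℝ 2 φ (Set.Ioi 0)) (hε : ε ≠ 0) (hF : 0 < F)
    (x z : ℤ → ℝ) :
    d2E (ECB N ε φ) (yLin ε F) (horiz x) (horiz z) =
      ε * ∑ ℓ ∈ Icc (1 : ℤ) N, (deriv (deriv φ) F * bdiff ε z ℓ * bdiff ε x ℓ +
        deriv (deriv φ) (2 * F) * (2 * bdiff ε z ℓ) * (2 * bdiff ε x ℓ)) := by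
  simp only [d2E, ECB_yLin_add hε]
  exact deriv_deriv_mul_sum_comp_abs hφ hF (by positivity) ε _ _ _ _ _

end Variations

end LinearChain

open LinearChain in
theorem stmt_11_general (N : ℕ) (hN : 4 ≤ N) (ε : ℝ) (hε : ε = (N : ℝ)⁻¹)
    (φ : ℝ → ℝ) (hφ : ContDiffOn ℝ 2 φ (Set.Ioi 0)) (F : ℝ) (hF : 0 < F)
    (hγ : 0 < deriv (deriv φ) F + 4 * deriv (deriv φ) (2 * F))
    (f ua uCB : ℤ → ℝ × ℝ) (hua : IsDisp1D N ua)
    (huCB : IsDisp1D N uCB)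
    (heqa : ∀ v : ℤ → ℝ × ℝ, IsDisp1D N v →
      dE (Ea N ε φ) (yLin ε F) v + d2E (Ea N ε φ) (yLin ε F) ua v = ip N ε f v)
    (heqCB : ∀ v : ℤ → ℝ × ℝ, IsDisp1D N v →
      dE (ECB N ε φ) (yLin ε F) v + d2E (ECB N ε φ) (yLin ε F) uCB v = ip N ε f v) :
    nrm N ε (bd ε (fun ℓ => ua ℓ - uCB ℓ)) ≤
      ε ^ 2 * |deriv (deriv φ) (2 * F)| /
        (deriv (deriv φ) F + 4 * deriv (deriv φ) (2 * F)) *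
        nrm N ε (bd ε (bd ε (bd ε ua))) := by
  have hN1 : 1 ≤ N := by omega
  have hεpos : 0 < ε := hε ▸ inv_pos.2 (by exact_mod_cast hN1)
  obtain ⟨x, rfl⟩ : ∃ x, ua = horiz x := ⟨_, hua.eq_horiz⟩
  obtain ⟨y, rfl⟩ : ∃ y, uCB = horiz y := ⟨_, huCB.eq_horiz⟩
  have hv : IsDisp1D N (horiz (x - y)) := horiz_sub x y ▸ hua.sub huCB
  have key := (heqa _ hv).trans (heqCB _ hv).symm
  rw [dE_Ea_yLin_eq_dE_ECB_yLin hφ hεpos.ne' hF hN1 hv.periodic, add_right_inj,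
    d2E_Ea_yLin hφ hεpos.ne' hF, d2E_ECB_yLin hφ hεpos.ne' hF, bdiff_sub] at key
  have hdx := hua.periodic.bdiff (ε := ε)
  have hconsistency := sum_sq_sub_eq_of_sum_eq hN1 hεpos.ne' hdx (huCB.periodic.bdiff (ε := ε))
    _ _ (mul_left_cancel₀ hεpos.ne' key)
  rw [horiz_sub, bd_horiz, bd_horiz, bd_horiz, bd_horiz, nrm_horiz, nrm_horiz, bdiff_sub]
  refine (sqrt_mul_sum_sq_le_of_eq hεpos.le hN1 hdx.bdiff.bdiff hγ hconsistency).trans_eq ?_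
  rw [abs_mul, abs_of_nonneg (sq_nonneg ε), mul_comm |_|]

theorem stmt_11 (N : ℕ) (hN : 4 ≤ N) (ε : ℝ) (hε : ε = (N : ℝ)⁻¹)
    (φ : ℝ → ℝ) (hφ : ContDiffOn ℝ 2 φ (Set.Ioi 0)) (F : ℝ) (hF : 0 < F)
    (hγ : 0 < deriv (deriv φ) F + 4 * deriv (deriv φ) (2 * F))
    (f ua uCB : ℤ → ℝ × ℝ) (hf : IsDisp1D N f) (hua : IsDisp1D N ua)
    (huCB : IsDisp1D N uCB)
    (heqa : ∀ v : ℤ → ℝ × ℝ, IsDisp1D N v →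
      dE (Ea N ε φ) (yLin ε F) v + d2E (Ea N ε φ) (yLin ε F) ua v = ip N ε f v)
    (heqCB : ∀ v : ℤ → ℝ × ℝ, IsDisp1D N v →
      dE (ECB N ε φ) (yLin ε F) v + d2E (ECB N ε φ) (yLin ε F) uCB v = ip N ε f v) :
    nrm N ε (bd ε (fun ℓ => ua ℓ - uCB ℓ)) ≤
      ε ^ 2 * |deriv (deriv φ) (2 * F)| /
        (deriv (deriv φ) F + 4 * deriv (deriv φ) (2 * F)) *
        nrm N ε (bd ε (bd ε (bd ε ua))) :=
  stmt_11_general N hN ε hε φ hφ F hF hγ f ua uCB hua huCB heqa heqCB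
end
end
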